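/- arXiv:0804.2080 — 6 statements merged into one kernel-verified Lean document; each statement's English description precedes it below -/
import Mathlib

section
/- There exists an admissible 𝕂-bilinear form on 'f; that is, a bilinear form B : 'f × 'f → 𝕂 with B(1,1) = 1, B(θ_i,θ_j) = δ_{ij}(1-q_i²)^{-1} for all i,j ∈ I, B(x, y y') = (B⊗B)(r(x), y⊗y') for all x,y,y' ∈ 'f, and B(x x', y) = (B⊗B)(x⊗x', r(y)) for all x,x',y ∈ 'f. -/
open scoped TensorProduct

noncomputable section

/-- The ground field `𝕂 = ℚ(q)`. -/
abbrev K : Type := RatFunc ℚ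

/-- `q ∈ ℚ(q)`. -/
abbrev qvar : K := RatFunc.X

/-- The free associative algebra `'f` on generators `θ i`, `i ∈ I`. -/
abbrev F (I : Type) : Type := FreeAlgebra K I

/-- The generators `θ i` of `'f`. -/
def θ {I : Type} (i : I) : F I := FreeAlgebra.ι K i

/-- A Cartan datum: a symmetric integer matrix with positive even diagonal such that
`2(i·j)/(i·i)` is a nonpositive integer for `i ≠ j`. -/
def CartanDatum {I : Type} (c : I → I → ℤ) : Prop :=
  (∀ i j, c i j = c j i) ∧ (∀ i, 0 < c i i ∧ Even (c i i)) ∧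
    (∀ i j, i ≠ j → c i j ≤ 0 ∧ c i i ∣ 2 * c i j)

/-- `q_i = q^{(i·i)/2}`. -/
def qi {I : Type} (c : I → I → ℤ) (i : I) : K := qvar ^ (c i i / 2)

/-- The bilinear extension of `·` to weights: `ν·μ = Σ_{i,j} ν(i) μ(j) (i·j)`. -/
def wtPair {I : Type} (c : I → I → ℤ) (ν μ : I →₀ ℕ) : ℤ :=
  ν.sum fun i a => μ.sum fun j b => (a : ℤ) * (b : ℤ) * c i j

/-- The subspace of `'f` of homogeneous elements of weight `ν ∈ ℕ[I]`: the span of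
all words `θ_{i_1} ⋯ θ_{i_r}` whose letters have multiplicities `ν`. -/
def wtSpace {I : Type} [DecidableEq I] (ν : I →₀ ℕ) : Submodule K (F I) :=
  Submodule.span K
    {x | ∃ l : List I, Multiset.toFinsupp (l : Multiset I) = ν ∧ x = (l.map θ).prod}

/-- The twisted multiplication on `'f ⊗ 'f`:
`(x₁⊗x₂)(y₁⊗y₂) = q^{-|x₂|·|y₁|} (x₁y₁)⊗(x₂y₂)` on homogeneous elements. -/
def IsTwistedMul {I : Type} [DecidableEq I] (c : I → I → ℤ)
    (m : F I ⊗[K] F I →ₗ[K] F I ⊗[K] F I →ₗ[K] F I ⊗[K] F I) : Prop :=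
  ∀ (ν μ : I →₀ ℕ) (x₁ x₂ y₁ y₂ : F I), x₂ ∈ wtSpace ν → y₁ ∈ wtSpace μ →
    m (x₁ ⊗ₜ[K] x₂) (y₁ ⊗ₜ[K] y₂) =
      (qvar ^ (-(wtPair c ν μ))) • ((x₁ * y₁) ⊗ₜ[K] (x₂ * y₂))

/-- `r : 'f → 'f ⊗ 'f` is an algebra homomorphism to the twisted tensor square with
`r(θ_i) = θ_i ⊗ 1 + 1 ⊗ θ_i`. -/
def IsComult {I : Type} (m : F I ⊗[K] F I →ₗ[K] F I ⊗[K] F I →ₗ[K] F I ⊗[K] F I)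
    (r : F I →ₗ[K] F I ⊗[K] F I) : Prop :=
  r 1 = (1 : F I) ⊗ₜ[K] (1 : F I) ∧ (∀ x y, r (x * y) = m (r x) (r y)) ∧
    ∀ i, r (θ i) = θ i ⊗ₜ[K] 1 + 1 ⊗ₜ[K] θ i

/-- The bilinear form `B⊗B` on `'f ⊗ 'f`, `(B⊗B)(x₁⊗x₂, y₁⊗y₂) = B(x₁,y₁)B(x₂,y₂)`. -/
def BB {I : Type} (B : F I →ₗ[K] F I →ₗ[K] K) :
    F I ⊗[K] F I →ₗ[K] F I ⊗[K] F I →ₗ[K] K :=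
  LinearMap.BilinForm.tmul B B

/-- Admissibility of a bilinear form on `'f`. -/
def Admissible {I : Type} [DecidableEq I] (c : I → I → ℤ) (r : F I →ₗ[K] F I ⊗[K] F I)
    (B : F I →ₗ[K] F I →ₗ[K] K) : Prop :=
  B 1 1 = 1 ∧
    (∀ i j, B (θ i) (θ j) = if i = j then (1 - qi c i ^ 2)⁻¹ else 0) ∧
    (∀ x y y', B x (y * y') = BB B (r x) (y ⊗ₜ[K] y')) ∧
    (∀ x x' y, B (x * x') y = BB B (x ⊗ₜ[K] x') (r y))


namespace Adm
variable {I : Type} [DecidableEq I] (c : I → I → ℤ)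
set_option linter.unusedSectionVars false

def ci (i : I) : K := (1 - (qvar ^ (c i i / 2)) ^ 2)⁻¹

def iwt (i : I) (l : List I) : ℤ := (l.map fun j => c i j).sum
def iwt2 (i : I) (l : List I) : ℤ := (l.map fun j => c j i).sum

@[simp] lemma iwt_nil (i : I) : iwt c i [] = 0 := rfl
@[simp] lemma iwt_cons (i j : I) (l : List I) : iwt c i (j :: l) = c i j + iwt c i l := by
  simp [iwt]
@[simp] lemma iwt2_nil (i : I) : iwt2 c i [] = 0 := rfl
@[simp] lemma iwt2_cons (i j : I) (l : List I) : iwt2 c i (j :: l) = c j i + iwt2 c i l := by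
  simp [iwt2]

lemma iwt_congr {i : I} {a b : List I} (h : (↑a : Multiset I) = ↑b) :
    iwt c i a = iwt c i b := by
  have : ((↑a : Multiset I).map fun j => c i j).sum = ((↑b : Multiset I).map fun j => c i j).sum := by
    rw [h]
  simpa [iwt, Multiset.map_coe, Multiset.sum_coe] using this

def D : List I → List (K × List I × List I)
  | [] => [(1, [], [])]
  | i :: l => (D l).map (fun p => (p.1, i :: p.2.1, p.2.2)) ++
      (D l).map (fun p => (p.1 * qvar ^ (-(iwt c i p.2.1)), p.2.1, i :: p.2.2))

def bword : List I → List I → K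
  | [], y => if y = [] then 1 else 0
  | i :: x, y =>
      ci c i * ((D c y).map fun p => if p.2.1 = [i] then p.1 * bword x p.2.2 else 0).sum

@[simp] lemma D_nil : D c ([] : List I) = [(1, [], [])] := rfl

lemma mem_D {l : List I} {p : K × List I × List I} (hp : p ∈ D c l) :
    (↑p.2.1 + ↑p.2.2 : Multiset I) = ↑l := by
  induction l generalizing p with
  | nil => simp [D] at hp; simp [hp]
  | cons i t ih =>
      rw [D, List.mem_append] at hp
      rcases hp with hp | hp <;> rcases List.mem_map.1 hp with ⟨q, hq, rfl⟩ <;>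
        have h2 := ih hq
      · show ((i :: q.2.1 : List I) : Multiset I) + ↑q.2.2 = _
        rw [show ((i :: q.2.1 : List I) : Multiset I) = i ::ₘ ↑q.2.1 from rfl,
          show ((i :: t : List I) : Multiset I) = i ::ₘ ↑t from rfl, Multiset.cons_add, h2]
      · show (↑q.2.1 : Multiset I) + ↑(i :: q.2.2) = _
        rw [show ((i :: q.2.2 : List I) : Multiset I) = i ::ₘ ↑q.2.2 from rfl,
          show ((i :: t : List I) : Multiset I) = i ::ₘ ↑t from rfl, Multiset.add_cons, h2]

variable {M : Type} [AddCommMonoid M] [Module K M]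

lemma smul_map_sum (r : K) {α : Type} (L : List α) (g : α → M) :
    (L.map fun a => r • g a).sum = r • (L.map g).sum := by
  rw [List.smul_sum, List.map_map]; rfl

lemma sum_map_add' {α : Type} (L : List α) (g h : α → M) :
    (L.map fun a => g a + h a).sum = (L.map g).sum + (L.map h).sum := by
  induction L with
  | nil => simp
  | cons a L ih => simp [ih]; abel

lemma DSum_cons (i : I) (l : List I) (f : K × List I × List I → M) :
    ((D c (i :: l)).map f).sum =
      ((D c l).map fun p => f (p.1, i :: p.2.1, p.2.2)).sum +
      ((D c l).map fun p => f (p.1 * qvar ^ (-(iwt c i p.2.1)), p.2.1, i :: p.2.2)).sum := by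
  rw [D, List.map_append, List.sum_append, List.map_map, List.map_map]; rfl

lemma DSum_left_nil (l : List I) (f : List I → M) :
    ((D c l).map fun p => if p.2.1 = [] then p.1 • f p.2.2 else 0).sum = f l := by
  induction l generalizing f with
  | nil => simp
  | cons i t ih =>
      rw [DSum_cons c i t (fun p => if p.2.1 = [] then p.1 • f p.2.2 else 0)]
      have h1 : ((D c t).map fun p =>
          if (i :: p.2.1 : List I) = [] then p.1 • f p.2.2 else 0).sum = 0 := by
        apply List.sum_eq_zero; intro x hx
        rcases List.mem_map.1 hx with ⟨p, _, rfl⟩; simp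
      have h2 : ((D c t).map fun p =>
          if p.2.1 = [] then (p.1 * qvar ^ (-(iwt c i p.2.1))) • f (i :: p.2.2) else 0) =
          ((D c t).map fun p => if p.2.1 = [] then p.1 • f (i :: p.2.2) else 0) := by
        apply List.map_congr_left; intro p _
        by_cases h : p.2.1 = [] <;> simp [h]
      rw [h1, h2, ih (fun b => f (i :: b))]
      simp

lemma DSum_single (i j : I) (u : List I) (f : List I → M) :
    ((D c (j :: u)).map fun p => if p.2.1 = [i] then p.1 • f p.2.2 else 0).sum =
      (if j = i then f u else 0) +
      qvar ^ (-(c j i)) •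
        ((D c u).map fun p => if p.2.1 = [i] then p.1 • f (j :: p.2.2) else 0).sum := by
  rw [DSum_cons c j u (fun p => if p.2.1 = [i] then p.1 • f p.2.2 else 0)]
  congr 1
  · by_cases hj : j = i
    · have h2 : ((D c u).map fun p =>
          if (j :: p.2.1 : List I) = [i] then p.1 • f p.2.2 else 0) =
          ((D c u).map fun p => if p.2.1 = [] then p.1 • f p.2.2 else 0) := by
        apply List.map_congr_left; intro p _
        by_cases h : p.2.1 = ([] : List I) <;> simp [h, hj]
      rw [h2, DSum_left_nil]; simp [hj]
    · have h2 : ((D c u).map fun p =>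
          if (j :: p.2.1 : List I) = [i] then p.1 • f p.2.2 else 0).sum = 0 := by
        apply List.sum_eq_zero; intro x hx
        rcases List.mem_map.1 hx with ⟨p, _, rfl⟩; simp [hj]
      rw [h2]; simp [hj]
  · have h2 : ((D c u).map fun p =>
        if p.2.1 = [i] then (p.1 * qvar ^ (-(iwt c j p.2.1))) • f (j :: p.2.2) else 0) =
        ((D c u).map fun p =>
          qvar ^ (-(c j i)) • (if p.2.1 = [i] then p.1 • f (j :: p.2.2) else 0)) := by
      apply List.map_congr_left; intro p _
      by_cases h : p.2.1 = [i]
      · simp [h, smul_smul, mul_comm]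
      · simp [h]
    rw [h2, smul_map_sum]

lemma DSum_single_append (i : I) (z w : List I) (f : List I → M) :
    ((D c (z ++ w)).map fun p => if p.2.1 = [i] then p.1 • f p.2.2 else 0).sum =
      ((D c z).map fun p => if p.2.1 = [i] then p.1 • f (p.2.2 ++ w) else 0).sum +
      qvar ^ (-(iwt2 c i z)) •
        ((D c w).map fun p => if p.2.1 = [i] then p.1 • f (z ++ p.2.2) else 0).sum := by
  induction z generalizing f with
  | nil =>
      have h1 : ((D c ([] : List I)).map fun p =>
          if p.2.1 = [i] then p.1 • f (p.2.2 ++ w) else 0).sum = 0 := by simp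
      simp only [List.nil_append, h1, iwt2_nil, neg_zero, zpow_zero, one_smul, zero_add]
  | cons j z ihz =>
      rw [show (j :: z) ++ w = j :: (z ++ w) from rfl, DSum_single, ihz (fun b => f (j :: b)),
        DSum_single c i j z (fun b => f (b ++ w))]
      simp only [smul_add, smul_smul, ← zpow_add₀ (RatFunc.X_ne_zero (K := ℚ)), add_assoc,
        List.cons_append, iwt2_cons, neg_add]

lemma iwt_split {u v a : List I} (h : (↑u + ↑v : Multiset I) = ↑a) (i : I) :
    iwt c i a = iwt c i u + iwt c i v := by
  have := congrArg (fun s : Multiset I => (s.map fun j => c i j).sum) h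
  simp only [Multiset.map_add, Multiset.sum_add, Multiset.map_coe, Multiset.sum_coe] at this
  simpa [iwt] using this.symm

lemma coassoc (l : List I) (G : List I → List I → List I → M) :
    ((D c l).map fun p =>
      p.1 • ((D c p.2.1).map fun q => q.1 • G q.2.1 q.2.2 p.2.2).sum).sum =
    ((D c l).map fun p =>
      p.1 • ((D c p.2.2).map fun q => q.1 • G p.2.1 q.2.1 q.2.2).sum).sum := by
  induction l generalizing G with
  | nil => simp
  | cons i l ih =>
      rw [DSum_cons c i l
        (fun p => p.1 • ((D c p.2.1).map fun q => q.1 • G q.2.1 q.2.2 p.2.2).sum),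
        DSum_cons c i l
        (fun p => p.1 • ((D c p.2.2).map fun q => q.1 • G p.2.1 q.2.1 q.2.2).sum)]
      have hL1 : ((D c l).map fun p =>
          p.1 • ((D c (i :: p.2.1)).map fun q => q.1 • G q.2.1 q.2.2 p.2.2).sum).sum =
          ((D c l).map fun p =>
            p.1 • ((D c p.2.1).map fun q => q.1 • G (i :: q.2.1) q.2.2 p.2.2).sum).sum +
          ((D c l).map fun p =>
            p.1 • ((D c p.2.1).map fun q =>
              q.1 • (qvar ^ (-(iwt c i q.2.1)) • G q.2.1 (i :: q.2.2) p.2.2)).sum).sum := by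
        rw [← sum_map_add']
        apply congrArg; apply List.map_congr_left; intro p _
        rw [DSum_cons c i p.2.1 (fun q => q.1 • G q.2.1 q.2.2 p.2.2), smul_add]
        congr 1
        apply congrArg; apply congrArg; apply List.map_congr_left; intro q _
        rw [mul_smul, smul_comm]
      have hL2 : ((D c l).map fun p =>
          (p.1 * qvar ^ (-(iwt c i p.2.1))) •
            ((D c p.2.1).map fun q => q.1 • G q.2.1 q.2.2 (i :: p.2.2)).sum).sum =
          ((D c l).map fun p =>
            p.1 • ((D c p.2.1).map fun q =>
              q.1 • ((qvar ^ (-(iwt c i q.2.1)) * qvar ^ (-(iwt c i q.2.2))) •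
                G q.2.1 q.2.2 (i :: p.2.2))).sum).sum := by
        apply congrArg; apply List.map_congr_left; intro p _
        rw [mul_smul, ← smul_map_sum (qvar ^ (-(iwt c i p.2.1)))]
        apply congrArg; apply congrArg; apply List.map_congr_left; intro q hq
        rw [iwt_split c (mem_D c hq) i, neg_add,
          zpow_add₀ (RatFunc.X_ne_zero (K := ℚ)), smul_comm]
      have hR2 : ((D c l).map fun p =>
          (p.1 * qvar ^ (-(iwt c i p.2.1))) •
            ((D c (i :: p.2.2)).map fun q => q.1 • G p.2.1 q.2.1 q.2.2).sum).sum =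
          ((D c l).map fun p =>
            p.1 • ((D c p.2.2).map fun q =>
              q.1 • (qvar ^ (-(iwt c i p.2.1)) • G p.2.1 (i :: q.2.1) q.2.2)).sum).sum +
          ((D c l).map fun p =>
            p.1 • ((D c p.2.2).map fun q =>
              q.1 • ((qvar ^ (-(iwt c i p.2.1)) * qvar ^ (-(iwt c i q.2.1))) •
                G p.2.1 q.2.1 (i :: q.2.2))).sum).sum := by
        rw [← sum_map_add']
        apply congrArg; apply List.map_congr_left; intro p _
        rw [DSum_cons c i p.2.2 (fun q => q.1 • G p.2.1 q.2.1 q.2.2), mul_smul, smul_add,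
          ← smul_map_sum (qvar ^ (-(iwt c i p.2.1))),
          ← smul_map_sum (qvar ^ (-(iwt c i p.2.1)))]
        rw [← smul_add]
        apply congrArg; rw [← sum_map_add', ← sum_map_add']
        apply congrArg; apply List.map_congr_left; intro q _
        simp [smul_smul, mul_comm, mul_left_comm, mul_assoc, mul_add, add_mul]
      have e1 := ih (fun u v w => G (i :: u) v w)
      have e2 := ih (fun u v w => qvar ^ (-(iwt c i u)) • G u (i :: v) w)
      have e3 := ih (fun u v w =>
        (qvar ^ (-(iwt c i u)) * qvar ^ (-(iwt c i v))) • G u v (i :: w))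
      rw [hL1, hL2, hR2, e1, e2, e3]
      abel

lemma bword_nil (y : List I) : bword c [] y = if y = [] then 1 else 0 := by rw [bword]

lemma bword_cons (i : I) (x y : List I) :
    bword c (i :: x) y =
      ci c i * ((D c y).map fun p => if p.2.1 = [i] then p.1 * bword c x p.2.2 else 0).sum := by
  rw [bword]

lemma bword_eq_zero {x y : List I} (h : (↑x : Multiset I) ≠ ↑y) : bword c x y = 0 := by
  induction x generalizing y with
  | nil =>
      rw [bword_nil, if_neg]
      rintro rfl; exact h rfl
  | cons i x ih =>
      rw [bword_cons]
      have : ((D c y).map fun p =>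
          if p.2.1 = [i] then p.1 * bword c x p.2.2 else 0).sum = 0 := by
        apply List.sum_eq_zero; intro t ht
        rcases List.mem_map.1 ht with ⟨p, hp, rfl⟩
        by_cases h1 : p.2.1 = [i]
        · have hd := mem_D c hp
          rw [h1] at hd
          have hx : (↑x : Multiset I) ≠ ↑p.2.2 := by
            intro hxe
            apply h
            rw [show ((i :: x : List I) : Multiset I) = i ::ₘ ↑x from rfl, ← hd, hxe]
            rfl
          simp [h1, ih hx]
        · simp [h1]
      rw [this, mul_zero]

lemma bword_append (x x' y : List I) :
    bword c (x ++ x') y =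
      ((D c y).map fun p => p.1 * (bword c x p.2.1 * bword c x' p.2.2)).sum := by
  induction x generalizing y with
  | nil =>
      rw [List.nil_append]
      have h := DSum_left_nil (M := K) c y (fun b => bword c x' b)
      rw [← h]
      apply congrArg; apply List.map_congr_left; intro p _
      by_cases hp : p.2.1 = [] <;> simp [hp, bword_nil, smul_eq_mul]
  | cons i x ih =>
      have hco := coassoc (M := K) c y
        (fun u v w => if u = [i] then bword c x v * bword c x' w else 0)
      simp only [smul_eq_mul] at hco
      have hL : ((D c y).map fun p =>
          if p.2.1 = [i] then p.1 * bword c (x ++ x') p.2.2 else 0).sum =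
          ((D c y).map fun p => p.1 * ((D c p.2.2).map fun q =>
            q.1 * (if p.2.1 = [i] then bword c x q.2.1 * bword c x' q.2.2 else 0)).sum).sum := by
        apply congrArg; apply List.map_congr_left; intro p _
        by_cases hp : p.2.1 = [i]
        · simp only [hp, if_true, ih]
          try rw [List.sum_map_mul_left]
        · simp only [hp, if_false]
          rw [eq_comm, mul_eq_zero]; right
          apply List.sum_eq_zero; intro t ht
          rcases List.mem_map.1 ht with ⟨q, _, rfl⟩; simp
      have hR : ((D c y).map fun p =>
          p.1 * (bword c (i :: x) p.2.1 * bword c x' p.2.2)).sum =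
          ci c i * ((D c y).map fun p => p.1 * ((D c p.2.1).map fun q =>
            q.1 * (if q.2.1 = [i] then bword c x q.2.2 * bword c x' p.2.2 else 0)).sum).sum := by
        rw [← List.sum_map_mul_left]
        apply congrArg; apply List.map_congr_left; intro p _
        rw [bword_cons]
        have h2 : ((D c p.2.1).map fun q =>
            q.1 * (if q.2.1 = [i] then bword c x q.2.2 * bword c x' p.2.2 else 0)).sum =
            ((D c p.2.1).map fun q =>
              if q.2.1 = [i] then q.1 * bword c x q.2.2 else 0).sum * bword c x' p.2.2 := by
          rw [← List.sum_map_mul_right]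
          apply congrArg; apply List.map_congr_left; intro q _
          by_cases h : q.2.1 = [i] <;> simp [h, mul_assoc]
        rw [h2]; ring
      rw [List.cons_append, bword_cons, hL, hR, hco]

lemma sum_map_comm {α β : Type} (L : List α) (L' : List β) (g : α → β → M) :
    (L.map fun a => (L'.map fun b => g a b).sum).sum =
      (L'.map fun b => (L.map fun a => g a b).sum).sum := by
  induction L with
  | nil =>
      simp only [List.map_nil, List.sum_nil]
      rw [eq_comm]
      apply List.sum_eq_zero; intro t ht
      rcases List.mem_map.1 ht with ⟨b, _, rfl⟩; simp
  | cons a L ih => simp [sum_map_add', ih]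

lemma iwt_eq_iwt2 (hsym : ∀ i j, c i j = c j i) (i : I) (l : List I) :
    iwt c i l = iwt2 c i l := by
  induction l with
  | nil => rfl
  | cons j l ih => rw [iwt_cons, iwt2_cons, ih, hsym]

lemma bword_split (hsym : ∀ i j, c i j = c j i) (x y y' : List I) :
    bword c x (y ++ y') =
      ((D c x).map fun p => p.1 * (bword c p.2.1 y * bword c p.2.2 y')).sum := by
  induction x generalizing y y' with
  | nil =>
      by_cases h1 : y = [] <;> by_cases h2 : y' = [] <;>
        simp [h1, h2, bword_nil]
  | cons i x ih =>
      rw [bword_cons]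
      have hstep := DSum_single_append (M := K) c i y y' (fun b => bword c x b)
      simp only [smul_eq_mul] at hstep
      rw [hstep, mul_add]
      have hA : ci c i * ((D c y).map fun p =>
          if p.2.1 = [i] then p.1 * bword c x (p.2.2 ++ y') else 0).sum =
          ((D c x).map fun p => ci c i * ((D c y).map fun q =>
            if q.2.1 = [i] then p.1 * (q.1 * (bword c p.2.1 q.2.2 * bword c p.2.2 y')) else 0).sum).sum := by
        rw [← List.sum_map_mul_left]
        trans ((D c y).map fun q => ((D c x).map fun p =>
          ci c i * (if q.2.1 = [i] then p.1 * (q.1 * (bword c p.2.1 q.2.2 * bword c p.2.2 y')) else 0)).sum).sum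
        · apply congrArg; apply List.map_congr_left; intro q _
          by_cases hq : q.2.1 = [i]
          · simp only [hq, if_true, ih]
            rw [← List.sum_map_mul_left, ← List.sum_map_mul_left]
            apply congrArg; apply List.map_congr_left; intro p _
            ring
          · simp only [hq, if_false, mul_zero]
            rw [eq_comm]
            apply List.sum_eq_zero; intro t ht
            rcases List.mem_map.1 ht with ⟨p, _, rfl⟩; simp
        · rw [sum_map_comm]
          apply congrArg; apply List.map_congr_left; intro p _
          rw [← List.sum_map_mul_left]
        -- done hA
      have hB : ci c i * (qvar ^ (-(iwt2 c i y)) * ((D c y').map fun p =>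
          if p.2.1 = [i] then p.1 * bword c x (y ++ p.2.2) else 0).sum) =
          ((D c x).map fun p => (p.1 * qvar ^ (-(iwt2 c i y))) * (ci c i * ((D c y').map fun q =>
            if q.2.1 = [i] then q.1 * (bword c p.2.1 y * bword c p.2.2 q.2.2) else 0).sum)).sum := by
        rw [← List.sum_map_mul_left, ← List.sum_map_mul_left]
        trans ((D c y').map fun q => ((D c x).map fun p =>
          ci c i * (qvar ^ (-(iwt2 c i y)) *
            (if q.2.1 = [i] then p.1 * (q.1 * (bword c p.2.1 y * bword c p.2.2 q.2.2)) else 0))).sum).sum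
        · apply congrArg; apply List.map_congr_left; intro q _
          by_cases hq : q.2.1 = [i]
          · simp only [hq, if_true, ih]
            rw [← List.sum_map_mul_left, ← List.sum_map_mul_left, ← List.sum_map_mul_left]
            apply congrArg; apply List.map_congr_left; intro p _
            ring
          · simp only [hq, if_false, mul_zero]
            rw [eq_comm]
            apply List.sum_eq_zero; intro t ht
            rcases List.mem_map.1 ht with ⟨p, _, rfl⟩; simp
        · rw [sum_map_comm]
          apply congrArg; apply List.map_congr_left; intro p _
          rw [← List.sum_map_mul_left, ← List.sum_map_mul_left]
          apply congrArg; apply List.map_congr_left; intro q _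
          by_cases hq : q.2.1 = [i] <;> simp [hq] <;> ring
      rw [hA, hB, ← sum_map_add']
      rw [DSum_cons c i x (fun p => p.1 * (bword c p.2.1 y * bword c p.2.2 y')), sum_map_add']
      congr 1
      · apply congrArg; apply List.map_congr_left; intro p _
        simp only []
        have hT : ((D c y).map fun q =>
            if q.2.1 = [i] then p.1 * (q.1 * (bword c p.2.1 q.2.2 * bword c p.2.2 y')) else 0).sum =
            (p.1 * bword c p.2.2 y') * ((D c y).map fun q =>
              if q.2.1 = [i] then q.1 * bword c p.2.1 q.2.2 else 0).sum := by
          rw [← List.sum_map_mul_left]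
          apply congrArg; apply List.map_congr_left; intro q _
          by_cases hq : q.2.1 = [i] <;> simp [hq] <;> ring
        rw [bword_cons, hT]; ring
      · apply congrArg; apply List.map_congr_left; intro p _
        simp only []
        have hT : ((D c y').map fun q =>
            if q.2.1 = [i] then q.1 * (bword c p.2.1 y * bword c p.2.2 q.2.2) else 0).sum =
            bword c p.2.1 y * ((D c y').map fun q =>
              if q.2.1 = [i] then q.1 * bword c p.2.2 q.2.2 else 0).sum := by
          rw [← List.sum_map_mul_left]
          apply congrArg; apply List.map_congr_left; intro q _
          by_cases hq : q.2.1 = [i] <;> simp [hq] <;> ring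
        rw [bword_cons, hT]
        by_cases hz : bword c p.2.1 y = 0
        · rw [hz]; ring
        · have hpm : (↑p.2.1 : Multiset I) = ↑y := by
            by_contra hne
            exact hz (bword_eq_zero c hne)
          have hiw : iwt c i p.2.1 = iwt2 c i y := by
            rw [iwt_congr c hpm, iwt_eq_iwt2 c hsym]
          rw [hiw]; ring

def Wl (l : List I) : F I := (l.map θ).prod

@[simp] lemma Wl_nil : Wl ([] : List I) = 1 := rfl

lemma Wl_cons (i : I) (l : List I) : Wl (i :: l) = θ i * Wl l := by
  simp [Wl]

lemma Wl_mem (l : List I) : Wl l ∈ wtSpace (Multiset.toFinsupp (↑l : Multiset I)) :=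
  Submodule.subset_span ⟨l, rfl, rfl⟩

lemma one_mem_wtSpace : (1 : F I) ∈ wtSpace (0 : I →₀ ℕ) := by
  have := Wl_mem (I := I) []
  simpa using this

lemma wtPair_zero (μ : I →₀ ℕ) : wtPair c 0 μ = 0 := by
  simp [wtPair]

lemma wtPair_single (i : I) (a : List I) :
    wtPair c (Multiset.toFinsupp (↑[i] : Multiset I)) (Multiset.toFinsupp (↑a : Multiset I)) =
      iwt c i a := by
  rw [show ((↑[i] : Multiset I)) = ({i} : Multiset I) from rfl, Multiset.toFinsupp_singleton]
  rw [wtPair, Finsupp.sum_single_index]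
  · induction a with
    | nil => simp
    | cons j t iht =>
        rw [show ((↑(j :: t) : Multiset I)) = ({j} : Multiset I) + ↑t by
          rw [Multiset.singleton_add]; rfl]
        rw [Multiset.toFinsupp_add, Multiset.toFinsupp_singleton,
          Finsupp.sum_add_index' (by intro j'; simp) (by intro j' b b'; push_cast; ring),
          Finsupp.sum_single_index (by simp), iht, iwt_cons]
        push_cast; ring
  · simp

lemma r_Wl {m : F I ⊗[K] F I →ₗ[K] F I ⊗[K] F I →ₗ[K] F I ⊗[K] F I}
    {r : F I →ₗ[K] F I ⊗[K] F I} (hm : IsTwistedMul c m) (hr : IsComult m r) (y : List I) :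
    r (Wl y) = ((D c y).map fun p => p.1 • (Wl p.2.1 ⊗ₜ[K] Wl p.2.2)).sum := by
  induction y with
  | nil => simpa using hr.1
  | cons i y ih =>
      rw [Wl_cons, hr.2.1, hr.2.2 i, ih, map_add, LinearMap.add_apply,
        map_list_sum, map_list_sum, List.map_map, List.map_map,
        DSum_cons c i y (fun p => p.1 • (Wl p.2.1 ⊗ₜ[K] Wl p.2.2))]
      congr 1
      · apply congrArg; apply List.map_congr_left; intro p _
        simp only [Function.comp_apply, map_smul]
        rw [hm (Multiset.toFinsupp (↑([] : List I) : Multiset I))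
          (Multiset.toFinsupp (↑p.2.1 : Multiset I)) (θ i) 1 (Wl p.2.1) (Wl p.2.2)
          (by simpa using one_mem_wtSpace) (Wl_mem p.2.1)]
        rw [show Multiset.toFinsupp (↑([] : List I) : Multiset I) = (0 : I →₀ ℕ) by simp]
        rw [wtPair_zero]
        simp [Wl_cons]
      · apply congrArg; apply List.map_congr_left; intro p _
        simp only [Function.comp_apply, map_smul]
        rw [hm (Multiset.toFinsupp (↑[i] : Multiset I))
          (Multiset.toFinsupp (↑p.2.1 : Multiset I)) 1 (θ i) (Wl p.2.1) (Wl p.2.2)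
          (by simpa [Wl] using Wl_mem (I := I) [i]) (Wl_mem p.2.1)]
        rw [wtPair_single]
        rw [smul_smul, mul_comm]
        simp [Wl_cons]

def eMA : F I ≃ₐ[K] MonoidAlgebra K (FreeMonoid I) :=
  FreeAlgebra.equivMonoidAlgebraFreeMonoid (R := K) (X := I)

lemma eMA_theta (i : I) : eMA (θ i) = MonoidAlgebra.single (FreeMonoid.of i) (1 : K) := by
  rw [eMA, θ, FreeAlgebra.equivMonoidAlgebraFreeMonoid]
  simp [MonoidAlgebra.of_apply]

lemma eMA_symm_single (l : List I) :
    eMA.symm (MonoidAlgebra.single (FreeMonoid.ofList l) (1 : K)) = Wl l := by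
  induction l with
  | nil =>
      rw [show FreeMonoid.ofList ([] : List I) = 1 from rfl, ← MonoidAlgebra.one_def, map_one]
      rfl
  | cons i t ih =>
      rw [FreeMonoid.ofList_cons,
        show MonoidAlgebra.single (FreeMonoid.of i * FreeMonoid.ofList t) (1 : K) =
          MonoidAlgebra.single (FreeMonoid.of i) (1 : K) *
            MonoidAlgebra.single (FreeMonoid.ofList t) (1 : K) by
          rw [MonoidAlgebra.single_mul_single, one_mul],
        map_mul, ih, ← eMA_theta, AlgEquiv.symm_apply_apply, Wl_cons]

lemma bas_apply (l : List I) :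
    (FreeAlgebra.basisFreeMonoid K I) (FreeMonoid.ofList l) = Wl l := by
  rw [FreeAlgebra.basisFreeMonoid, Module.Basis.map_apply]
  rw [show (Finsupp.basisSingleOne (R := K) (ι := FreeMonoid I)) (FreeMonoid.ofList l) =
    Finsupp.single (FreeMonoid.ofList l) (1 : K) from by simp [Finsupp.coe_basisSingleOne]]
  exact eMA_symm_single l

lemma span_Wl : Submodule.span K (Set.range (Wl : List I → F I)) = ⊤ := by
  apply top_unique
  rw [← (FreeAlgebra.basisFreeMonoid K I).span_eq]
  apply Submodule.span_mono
  rintro _ ⟨w, rfl⟩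
  exact ⟨FreeMonoid.toList w, by rw [← bas_apply]; rfl⟩

lemma Wl_induction (P : F I → Prop) (hw : ∀ l, P (Wl l)) (h0 : P 0)
    (hadd : ∀ u v, P u → P v → P (u + v)) (hsmul : ∀ (k : K) (u), P u → P (k • u))
    (x : F I) : P x := by
  have hx : x ∈ Submodule.span K (Set.range (Wl : List I → F I)) := by
    rw [span_Wl]; trivial
  induction hx using Submodule.span_induction with
  | mem x h => rcases h with ⟨l, rfl⟩; exact hw l
  | zero => exact h0
  | add u v _ _ pu pv => exact hadd u v pu pv
  | smul k u _ pu => exact hsmul k u pu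

def Bform : F I →ₗ[K] F I →ₗ[K] K :=
  (FreeAlgebra.basisFreeMonoid K I).constr K fun w =>
    (FreeAlgebra.basisFreeMonoid K I).constr K fun w' =>
      bword c (FreeMonoid.toList w) (FreeMonoid.toList w')

lemma Bform_apply (x y : List I) : Bform c (Wl x) (Wl y) = bword c x y := by
  rw [← bas_apply, ← bas_apply, Bform, Module.Basis.constr_basis, Module.Basis.constr_basis,
    FreeMonoid.toList_ofList, FreeMonoid.toList_ofList]

lemma Wl_append (a b : List I) : Wl (a ++ b) = Wl a * Wl b := by
  simp [Wl]

lemma list_sum_apply {M N : Type} [AddCommMonoid M] [Module K M] [AddCommMonoid N]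
    [Module K N] (L : List (M →ₗ[K] N)) (x : M) :
    L.sum x = (L.map fun f => f x).sum := by
  induction L with
  | nil => simp
  | cons f L ih => simp [ih]
end Adm
set_option maxHeartbeats 2000000 in
set_option synthInstance.maxHeartbeats 400000 in
/-- existence of an admissible bilinear form on 'f. -/
theorem admissible_form_exists {I : Type} [Fintype I] [DecidableEq I]
    (c : I → I → ℤ) (hc : CartanDatum c)
    (m : F I ⊗[K] F I →ₗ[K] F I ⊗[K] F I →ₗ[K] F I ⊗[K] F I)
    (hm : IsTwistedMul c m)
    (r : F I →ₗ[K] F I ⊗[K] F I) (hr : IsComult m r) :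
    ∃ B : F I →ₗ[K] F I →ₗ[K] K, Admissible c r B := by
  classical
  obtain ⟨hsym, -, -⟩ := hc
  refine ⟨Adm.Bform c, ?_, ?_, ?_, ?_⟩
  · have h := Adm.Bform_apply c [] []
    rw [Adm.Wl_nil, Adm.bword_nil] at h
    simpa using h
  · intro i j
    have hb := Adm.Bform_apply c [i] [j]
    rw [show Adm.Wl [i] = θ i from by simp [Adm.Wl],
      show Adm.Wl [j] = θ j from by simp [Adm.Wl]] at hb
    rw [hb, Adm.bword_cons]
    have hs := Adm.DSum_single (M := K) c i j [] (fun b => Adm.bword c [] b)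
    simp only [smul_eq_mul] at hs
    rw [hs]
    simp only [Adm.D_nil, Adm.bword_nil]
    by_cases hij : i = j
    · subst hij; simp [Adm.ci, qi]
    · simp [hij, Ne.symm hij]
  · -- B x (y * y') = BB B (r x) (y ⊗ y')
    intro x y y'
    have key : ∀ (l a b : List I),
        Adm.Bform c (Adm.Wl l) (Adm.Wl a * Adm.Wl b) =
          BB (Adm.Bform c) (r (Adm.Wl l)) (Adm.Wl a ⊗ₜ[K] Adm.Wl b) := by
      intro l a b
      rw [← Adm.Wl_append, Adm.Bform_apply, Adm.bword_split c hsym l a b,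
        Adm.r_Wl c hm hr l, map_list_sum, List.map_map, Adm.list_sum_apply, List.map_map]
      apply congrArg; apply List.map_congr_left; intro p _
      simp only [Function.comp_apply, map_smul, LinearMap.smul_apply, BB,
        LinearMap.BilinForm.tensorDistrib_tmul, Adm.Bform_apply, smul_eq_mul]
      ring
    -- extend to all x, y, y'
    have key2 : ∀ (x : F I) (a b : List I),
        Adm.Bform c x (Adm.Wl a * Adm.Wl b) =
          BB (Adm.Bform c) (r x) (Adm.Wl a ⊗ₜ[K] Adm.Wl b) := by
      intro x a b
      induction x using Adm.Wl_induction with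
      | hw l => exact key l a b
      | h0 => simp
      | hadd u v pu pv => simp only [map_add, LinearMap.add_apply, pu, pv]
      | hsmul k u pu => simp only [map_smul, LinearMap.smul_apply, pu]
    have key3 : ∀ (x : F I) (a : List I) (y' : F I),
        Adm.Bform c x (Adm.Wl a * y') =
          BB (Adm.Bform c) (r x) (Adm.Wl a ⊗ₜ[K] y') := by
      intro x a y'
      induction y' using Adm.Wl_induction with
      | hw l => exact key2 x a l
      | h0 => simp
      | hadd u v pu pv =>
          simp only [mul_add, map_add, TensorProduct.tmul_add, pu, pv]
      | hsmul k u pu =>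
          simp only [mul_smul_comm, map_smul, TensorProduct.tmul_smul, pu]
    induction y using Adm.Wl_induction with
    | hw l => exact key3 x l y'
    | h0 => simp
    | hadd u v pu pv =>
        simp only [add_mul, map_add, TensorProduct.add_tmul, LinearMap.add_apply, pu, pv]
    | hsmul k u pu =>
        simp only [smul_mul_assoc, map_smul, ← TensorProduct.smul_tmul',
          LinearMap.smul_apply, pu]
  · -- B (x * x') y = BB B (x ⊗ x') (r y)
    intro x x' y
    have key : ∀ (a b l : List I),
        Adm.Bform c (Adm.Wl a * Adm.Wl b) (Adm.Wl l) =
          BB (Adm.Bform c) (Adm.Wl a ⊗ₜ[K] Adm.Wl b) (r (Adm.Wl l)) := by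
      intro a b l
      rw [← Adm.Wl_append, Adm.Bform_apply, Adm.bword_append c a b l,
        Adm.r_Wl c hm hr l, map_list_sum, List.map_map]
      apply congrArg; apply List.map_congr_left; intro p _
      simp only [Function.comp_apply, map_smul, BB,
        LinearMap.BilinForm.tensorDistrib_tmul, Adm.Bform_apply, smul_eq_mul]
      ring
    have key2 : ∀ (a b : List I) (y : F I),
        Adm.Bform c (Adm.Wl a * Adm.Wl b) y =
          BB (Adm.Bform c) (Adm.Wl a ⊗ₜ[K] Adm.Wl b) (r y) := by
      intro a b y
      induction y using Adm.Wl_induction with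
      | hw l => exact key a b l
      | h0 => simp
      | hadd u v pu pv => simp only [map_add, pu, pv]
      | hsmul k u pu => simp only [map_smul, pu]
    have key3 : ∀ (a : List I) (x' y : F I),
        Adm.Bform c (Adm.Wl a * x') y =
          BB (Adm.Bform c) (Adm.Wl a ⊗ₜ[K] x') (r y) := by
      intro a x' y
      induction x' using Adm.Wl_induction with
      | hw l => exact key2 a l y
      | h0 => simp
      | hadd u v pu pv =>
          simp only [mul_add, map_add, LinearMap.add_apply, TensorProduct.tmul_add, pu, pv]
      | hsmul k u pu =>
          simp only [mul_smul_comm, map_smul, TensorProduct.tmul_smul,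
            LinearMap.smul_apply, pu]
    induction x using Adm.Wl_induction with
    | hw l => exact key3 l x' y
    | h0 => simp
    | hadd u v pu pv =>
        simp only [add_mul, map_add, TensorProduct.add_tmul, LinearMap.add_apply, pu, pv]
    | hsmul k u pu =>
        simp only [smul_mul_assoc, map_smul, ← TensorProduct.smul_tmul',
          LinearMap.smul_apply, pu]
end
end

section
/- The admissible bilinear form on 'f is unique: if B and B' are two 𝕂-bilinear forms on 'f each satisfying B(1,1) = 1, B(θ_i,θ_j) = δ_{ij}(1-q_i²)^{-1}, B(x, y y') = (B⊗B)(r(x), y⊗y'), and B(x x', y) = (B⊗B)(x⊗x', r(y)), then B = B'. -/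
open scoped TensorProduct

noncomputable section

/-!
Admissibility determines `B` from its values on generators. The rule
`B(x, yy') = (B⊗B)(r x, y⊗y')` with `r 1 = 1⊗1` makes `B(1, ·)` multiplicative, so it is the
counit `ε = FreeAlgebra.algebraMapInv`; with `r θᵢ = θᵢ⊗1 + 1⊗θᵢ` it makes `B(θᵢ, ·)` an
`ε`-derivation, fixed by its values `B(θᵢ, θⱼ)`. Finally `B(xx', ·) = (B⊗B)(x⊗x', r ·)`
propagates agreement of two admissible forms from `1` and the generators to all of `'f`.
-/

theorem FreeAlgebra.linearMap_ext_of_derivation {R X : Type*} [CommRing R]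
    (ε : FreeAlgebra R X →ₐ[R] R) {D D' : FreeAlgebra R X →ₗ[R] R}
    (hD : ∀ y y', D (y * y') = D y * ε y' + ε y * D y')
    (hD' : ∀ y y', D' (y * y') = D' y * ε y' + ε y * D' y')
    (h : ∀ x, D (ι R x) = D' (ι R x)) : D = D' := by
  have hD1 : D 1 = 0 := by simpa using hD 1 1
  have hD'1 : D' 1 = 0 := by simpa using hD' 1 1
  ext y
  induction y using FreeAlgebra.induction with
  | grade0 k => rw [Algebra.algebraMap_eq_smul_one, map_smul, map_smul, hD1, hD'1]
  | grade1 x => exact h x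
  | mul y y' hy hy' => rw [hD, hD', hy, hy']
  | add y y' hy hy' => rw [map_add, map_add, hy, hy']

variable {I : Type}

lemma BB_tmul (B : F I →ₗ[K] F I →ₗ[K] K) (x x' y y' : F I) :
    BB B (x ⊗ₜ[K] x') (y ⊗ₜ[K] y') = B x y * B x' y' := by
  simp only [BB, LinearMap.BilinForm.tmul, LinearMap.BilinForm.tensorDistrib_tmul, smul_eq_mul]
  ring

lemma BB_tmul_congr {B B' : F I →ₗ[K] F I →ₗ[K] K} {x x' : F I}
    (hx : B x = B' x) (hx' : B x' = B' x') : BB B (x ⊗ₜ[K] x') = BB B' (x ⊗ₜ[K] x') :=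
  TensorProduct.ext' fun y y' => by rw [BB_tmul, BB_tmul, hx, hx']

namespace Admissible

variable [DecidableEq I] {c : I → I → ℤ}
  {m : F I ⊗[K] F I →ₗ[K] F I ⊗[K] F I →ₗ[K] F I ⊗[K] F I} {r : F I →ₗ[K] F I ⊗[K] F I}
  {B B' : F I →ₗ[K] F I →ₗ[K] K}

lemma apply_one_theta (hB : Admissible c r B) (hr : IsComult m r) (j : I) :
    B 1 (θ j) = 0 := by
  have h := hB.2.2.2 1 1 (θ j)
  rw [one_mul, hr.2.2, map_add, BB_tmul, BB_tmul, hB.1, mul_one, one_mul] at h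
  exact left_eq_add.mp h

lemma apply_one_eq_algebraMapInv (hB : Admissible c r B) (hr : IsComult m r) :
    B 1 = FreeAlgebra.algebraMapInv.toLinearMap := by
  have hmul : ∀ y y', B 1 (y * y') = B 1 y * B 1 y' := fun y y' => by
    rw [hB.2.2.1, hr.1, BB_tmul]
  calc B 1 = (AlgHom.ofLinearMap (B 1) hB.1 hmul).toLinearMap := rfl
    _ = _ := congrArg AlgHom.toLinearMap <| FreeAlgebra.hom_ext <| funext fun j => by
      simpa [FreeAlgebra.algebraMapInv, θ] using hB.apply_one_theta hr j

lemma apply_theta_mul (hB : Admissible c r B) (hr : IsComult m r) (i : I) (y y' : F I) :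
    B (θ i) (y * y') =
      B (θ i) y * FreeAlgebra.algebraMapInv y' + FreeAlgebra.algebraMapInv y * B (θ i) y' := by
  rw [hB.2.2.1, hr.2.2, map_add, LinearMap.add_apply, BB_tmul, BB_tmul,
    hB.apply_one_eq_algebraMapInv hr]
  rfl

lemma apply_theta_eq (hB : Admissible c r B) (hB' : Admissible c r B') (hr : IsComult m r)
    (i : I) : B (θ i) = B' (θ i) :=
  FreeAlgebra.linearMap_ext_of_derivation _ (hB.apply_theta_mul hr i)
    (hB'.apply_theta_mul hr i)
    fun j => (hB.2.1 i j).trans (hB'.2.1 i j).symm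

lemma apply_mul (hB : Admissible c r B) (x x' : F I) : B (x * x') = (BB B (x ⊗ₜ[K] x')).comp r :=
  LinearMap.ext (hB.2.2.2 x x')

end Admissible

theorem admissible_form_unique_general {I : Type} [DecidableEq I]
    (c : I → I → ℤ)
    (m : F I ⊗[K] F I →ₗ[K] F I ⊗[K] F I →ₗ[K] F I ⊗[K] F I)
    (r : F I →ₗ[K] F I ⊗[K] F I) (hr : IsComult m r)
    (B B' : F I →ₗ[K] F I →ₗ[K] K)
    (hB : Admissible c r B) (hB' : Admissible c r B') :
    B = B' := by
  refine LinearMap.ext fun x => ?_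
  induction x using FreeAlgebra.induction with
  | grade0 k =>
    rw [Algebra.algebraMap_eq_smul_one, map_smul, map_smul, hB.apply_one_eq_algebraMapInv hr,
      hB'.apply_one_eq_algebraMapInv hr]
  | grade1 i => exact hB.apply_theta_eq hB' hr i
  | mul x x' hx hx' => rw [hB.apply_mul, hB'.apply_mul, BB_tmul_congr hx hx']
  | add x x' hx hx' => rw [map_add, map_add, hx, hx']

/-- uniqueness of the admissible bilinear form on 'f. -/
theorem admissible_form_unique {I : Type} [Fintype I] [DecidableEq I]
    (c : I → I → ℤ) (hc : CartanDatum c)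
    (m : F I ⊗[K] F I →ₗ[K] F I ⊗[K] F I →ₗ[K] F I ⊗[K] F I)
    (hm : IsTwistedMul c m)
    (r : F I →ₗ[K] F I ⊗[K] F I) (hr : IsComult m r)
    (B B' : F I →ₗ[K] F I →ₗ[K] K)
    (hB : Admissible c r B) (hB' : Admissible c r B') :
    B = B' :=
  admissible_form_unique_general c m r hr B B' hB hB'
end
end

section
/- Any 𝕂-bilinear form B on 'f satisfying B(1,1) = 1, B(θ_i,θ_j) = δ_{ij}(1-q_i²)^{-1}, B(x, y y') = (B⊗B)(r(x), y⊗y'), and B(x x', y) = (B⊗B)(x⊗x', r(y)) is symmetric: B(x,y) = B(y,x) for all x,y ∈ 'f. -/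
open scoped TensorProduct

noncomputable section

set_option maxHeartbeats 1000000
set_option synthInstance.maxHeartbeats 1000000
/-- any admissible bilinear form on 'f is symmetric. -/
theorem admissible_form_symm {I : Type} [Fintype I] [DecidableEq I]
    (c : I → I → ℤ) (hc : CartanDatum c)
    (m : F I ⊗[K] F I →ₗ[K] F I ⊗[K] F I →ₗ[K] F I ⊗[K] F I)
    (hm : IsTwistedMul c m)
    (r : F I →ₗ[K] F I ⊗[K] F I) (hr : IsComult m r)
    (B : F I →ₗ[K] F I →ₗ[K] K) (hB : Admissible c r B) :
    ∀ x y : F I, B x y = B y x := by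
  obtain ⟨hB1, hBθ, hBr, hBl⟩ := hB
  obtain ⟨hr1, -, hrθ⟩ := hr
  have hBB : ∀ a b c d : F I, BB B (a ⊗ₜ[K] b) (c ⊗ₜ[K] d) = B a c * B b d := by
    intro a b c d
    simp [BB, smul_eq_mul, mul_comm]
  -- B θ_i 1 = 0
  have hθ1 : ∀ i, B (θ i) 1 = 0 := by
    intro i
    have h := hBr (θ i) 1 1
    rw [one_mul, hrθ, map_add] at h
    simp only [LinearMap.add_apply, hBB, hB1] at h
    linear_combination -h
  have h1θ : ∀ i, B 1 (θ i) = 0 := by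
    intro i
    have h := hBl 1 1 (θ i)
    rw [one_mul, hrθ, map_add] at h
    simp only [map_add, LinearMap.add_apply, hBB, hB1] at h
    linear_combination -h
  -- Q : B 1 y = B y 1
  have hQ : ∀ y : F I, B 1 y = B y 1 := by
    intro y
    induction y using FreeAlgebra.induction with
    | grade0 k =>
      rw [Algebra.algebraMap_eq_smul_one]
      simp [map_smul, hB1]
    | grade1 i => exact (h1θ i).trans (hθ1 i).symm
    | add a b ha hb => simp [map_add, ha, hb]
    | mul a b ha hb =>
      have h1 : B 1 (a * b) = B 1 a * B 1 b := by
        rw [hBr 1 a b, hr1, hBB]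
      have h2 : B (a * b) 1 = B a 1 * B b 1 := by
        rw [hBl a b 1, hr1, hBB]
      rw [h1, h2, ha, hb]
  -- R : B θ_i y = B y θ_i
  have hR : ∀ (y : F I) (i : I), B (θ i) y = B y (θ i) := by
    intro y
    induction y using FreeAlgebra.induction with
    | grade0 k =>
      intro i
      rw [Algebra.algebraMap_eq_smul_one]
      simp [map_smul, hθ1 i, h1θ i]
    | grade1 j =>
      intro i
      show B (θ i) (θ j) = B (θ j) (θ i)
      rw [hBθ, hBθ]
      rcases eq_or_ne i j with h | h
      · subst h; rfl
      · rw [if_neg h, if_neg (Ne.symm h)]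
    | add a b ha hb => intro i; simp [map_add, ha i, hb i]
    | mul a b ha hb =>
      intro i
      have h1 : B (θ i) (a * b) = B (θ i) a * B 1 b + B 1 a * B (θ i) b := by
        rw [hBr (θ i) a b, hrθ, map_add]
        simp only [LinearMap.add_apply, hBB]
      have h2 : B (a * b) (θ i) = B a (θ i) * B b 1 + B a 1 * B b (θ i) := by
        rw [hBl a b (θ i), hrθ, map_add]
        simp only [map_add, LinearMap.add_apply, hBB]
      rw [h1, h2, ha i, hb i, hQ a, hQ b]
  -- main induction
  intro x
  induction x using FreeAlgebra.induction with
  | grade0 k =>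
    intro y
    rw [Algebra.algebraMap_eq_smul_one]
    simp [map_smul, hQ y]
  | grade1 i => intro y; exact hR y i
  | add a b ha hb => intro y; simp [map_add, ha y, hb y]
  | mul a b ha hb =>
    intro y
    have key : ∀ t : F I ⊗[K] F I, BB B (a ⊗ₜ[K] b) t = BB B t (a ⊗ₜ[K] b) := by
      intro t
      induction t using TensorProduct.induction_on with
      | zero => simp
      | tmul c d => rw [hBB, hBB, ha c, hb d]
      | add s t hs ht => simp [map_add, hs, ht]
    rw [hBl a b y, hBr y a b, key]
end
end

section
/- Let B be an admissible bilinear form on 'f. For every pair i ≠ j in I, the quantum Serre element S_{ij} = Σ_{a=0}^{d_{ij}+1} (-1)^a θ_i^{(a)} θ_j θ_i^{(d_{ij}+1-a)} lies in the radical of B: B(S_{ij}, y) = 0 for all y ∈ 'f. -/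
open scoped TensorProduct

noncomputable section

/-- The quantum integer [n]_i = q_i^{n-1} + q_i^{n-3} + ⋯ + q_i^{1-n}. -/
def qint {I : Type} (c : I → I → ℤ) (i : I) (n : ℕ) : K :=
  ∑ k ∈ Finset.range n, qi c i ^ ((n : ℤ) - 1 - 2 * (k : ℤ))

/-- The quantum factorial [n]_i!. -/
def qfact {I : Type} (c : I → I → ℤ) (i : I) (n : ℕ) : K :=
  ∏ k ∈ Finset.range n, qint c i (k + 1)

/-- The divided power θ_i^{(n)} = θ_i^n / [n]_i!. -/
def θdp {I : Type} (c : I → I → ℤ) (i : I) (n : ℕ) : F I :=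
  (qfact c i n)⁻¹ • (θ i) ^ n

/-- d_{ij} = -2(i·j)/(i·i). -/
def dij {I : Type} (c : I → I → ℤ) (i j : I) : ℕ := ((-(2 * c i j)) / c i i).toNat

/-- The quantum Serre element Σ_{a=0}^{d_{ij}+1} (-1)^a θ_i^{(a)} θ_j θ_i^{(d_{ij}+1-a)}. -/
def serreElem {I : Type} (c : I → I → ℤ) (i j : I) : F I :=
  ∑ a ∈ Finset.range (dij c i j + 2),
    ((-1 : K) ^ a) • (θdp c i a * θ j * θdp c i (dij c i j + 1 - a))


set_option maxHeartbeats 1000000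
set_option synthInstance.maxHeartbeats 400000

namespace Aux

section
variable {I : Type} [DecidableEq I]

/-- words -/
def word (l : List I) : F I := (l.map θ).prod

@[simp] lemma word_nil : word ([] : List I) = 1 := rfl
@[simp] lemma word_cons (a : I) (l : List I) : word (a :: l) = θ a * word l := by
  simp [word]

/-- counit -/
def eps : F I →ₐ[K] K := FreeAlgebra.lift K (fun _ => (0:K))

@[simp] lemma eps_theta (i : I) : eps (θ i) = 0 := FreeAlgebra.lift_ι_apply _ _

/-- dual number realization picking out coefficient of `θ k` -/
def phi (k : I) : F I →ₐ[K] DualNumber K :=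
  FreeAlgebra.lift K (fun l => if l = k then DualNumber.eps else 0)

lemma phi_fst (k : I) (x : F I) : (phi k x).fst = eps x := by
  have h : (TrivSqZeroExt.fstHom K K K).comp (phi k) = eps := by
    apply FreeAlgebra.hom_ext
    funext l
    show (TrivSqZeroExt.fstHom K K K) (phi k (FreeAlgebra.ι K l)) = eps (FreeAlgebra.ι K l)
    rw [show phi k (FreeAlgebra.ι K l) = (if l = k then DualNumber.eps else 0) from
      FreeAlgebra.lift_ι_apply _ _,
      show eps (FreeAlgebra.ι K l) = (0:K) from FreeAlgebra.lift_ι_apply _ _]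
    split
    · exact DualNumber.fst_eps
    · simp
  exact DFunLike.congr_fun h x

/-- the `k`-th coefficient functional -/
def Dk (k : I) : F I →ₗ[K] K :=
  (TrivSqZeroExt.sndHom K K).comp (phi k).toLinearMap

@[simp] lemma Dk_one (k : I) : Dk k (1 : F I) = 0 := by
  simp only [Dk, LinearMap.comp_apply, AlgHom.toLinearMap_apply, map_one,
    TrivSqZeroExt.sndHom_apply, TrivSqZeroExt.snd_one]

@[simp] lemma Dk_theta (k l : I) : Dk k (θ l) = if l = k then 1 else 0 := by
  simp only [Dk, LinearMap.comp_apply, AlgHom.toLinearMap_apply, θ, phi,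
    FreeAlgebra.lift_ι_apply, TrivSqZeroExt.sndHom_apply]
  split
  · exact DualNumber.snd_eps
  · exact TrivSqZeroExt.snd_zero

lemma Dk_mul (k : I) (x y : F I) :
    Dk k (x * y) = eps x * Dk k y + eps y * Dk k x := by
  simp only [Dk, LinearMap.comp_apply, AlgHom.toLinearMap_apply, map_mul,
    TrivSqZeroExt.sndHom_apply, TrivSqZeroExt.snd_mul, phi_fst]
  rw [MulOpposite.smul_eq_mul_unop]
  simp only [MulOpposite.unop_op, smul_eq_mul]
  ring

@[simp] lemma eps_word (l : List I) : eps (word l) = if l = [] then 1 else 0 := by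
  induction l with
  | nil => simp
  | cons a l ih => simp [map_mul, ih]

@[simp] lemma Dk_word (k : I) (l : List I) :
    Dk k (word l) = if l = [k] then 1 else 0 := by
  induction l with
  | nil => simp
  | cons a l ih =>
    rw [word_cons, Dk_mul, ih]
    rcases l with _ | ⟨b, l⟩
    · simp [eps_word]
    · simp [eps_word]

/-- every element is in the span of words -/
lemma mem_span_words (x : F I) :
    x ∈ Submodule.span K {y : F I | ∃ l : List I, y = word l} := by
  set S := Submodule.span K {y : F I | ∃ l : List I, y = word l} with hS
  have hword : ∀ l : List I, word l ∈ S := fun l => Submodule.subset_span ⟨l, rfl⟩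
  have hmul : ∀ a b : F I, a ∈ S → b ∈ S → a * b ∈ S := by
    intro a b ha hb
    induction ha using Submodule.span_induction with
    | mem x hx =>
      obtain ⟨l, rfl⟩ := hx
      induction hb using Submodule.span_induction with
      | mem y hy =>
        obtain ⟨l', rfl⟩ := hy
        have : word l * word l' = word (l ++ l') := by
          simp [word, List.prod_append]
        rw [this]; exact hword _
      | zero => rw [mul_zero]; exact S.zero_mem
      | add y z _ _ hy hz => rw [mul_add]; exact S.add_mem hy hz
      | smul a y _ hy => rw [mul_smul_comm]; exact S.smul_mem _ hy
    | zero => rw [zero_mul]; exact S.zero_mem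
    | add x y _ _ hx hy => rw [add_mul]; exact S.add_mem hx hy
    | smul a x _ hx => rw [smul_mul_assoc]; exact S.smul_mem _ hx
  refine FreeAlgebra.induction K I ?_ ?_ (fun a b ha hb => hmul a b ha hb)
    (fun a b ha hb => S.add_mem ha hb) x
  · intro r; rw [Algebra.algebraMap_eq_smul_one]; exact S.smul_mem _ (hword [])
  · intro i; simpa [word, θ] using hword [i]


lemma word_mem_wtSpace (l : List I) : word l ∈ wtSpace (Multiset.toFinsupp (l : Multiset I)) :=
  Submodule.subset_span ⟨l, rfl, rfl⟩

lemma one_mem_wtSpace : (1 : F I) ∈ wtSpace (0 : I →₀ ℕ) := by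
  apply Submodule.subset_span
  exact ⟨[], by simp, by simp⟩

lemma theta_mem_wtSpace (l : I) : θ l ∈ wtSpace (Finsupp.single l 1) := by
  apply Submodule.subset_span
  exact ⟨[l], by simp, by simp⟩

variable (c : I → I → ℤ)

@[simp] lemma wtPair_zero_left (μ : I →₀ ℕ) : wtPair c 0 μ = 0 :=
  Finsupp.sum_zero_index

@[simp] lemma wtPair_zero_right (ν : I →₀ ℕ) : wtPair c ν 0 = 0 := by
  unfold wtPair
  simp [Finsupp.sum_zero_index]

lemma wtPair_single_single (l k : I) :
    wtPair c (Finsupp.single l 1) (Finsupp.single k 1) = c l k := by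
  unfold wtPair
  rw [Finsupp.sum_single_index, Finsupp.sum_single_index] <;> simp [Finsupp.sum_zero_index]


end

section
variable {I : Type} (c : I → I → ℤ) (i : I)

lemma qvar_ne_zero : (qvar : K) ≠ 0 := RatFunc.X_ne_zero

lemma qi_ne_zero : qi c i ≠ 0 := zpow_ne_zero _ qvar_ne_zero

/-- `ρ n = Σ_{t<n} v^{-2t}` -/
def rho (n : ℕ) : K := ∑ t ∈ Finset.range n, qi c i ^ (-(2 * (t : ℤ)))

@[simp] lemma rho_zero : rho c i 0 = 0 := by simp [rho]

@[simp] lemma rho_one : rho c i 1 = 1 := by simp [rho]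

lemma rho_succ (n : ℕ) : rho c i (n + 1) = 1 + qi c i ^ (-2 : ℤ) * rho c i n := by
  unfold rho
  rw [Finset.sum_range_succ']
  have h : ∀ t ∈ Finset.range n, qi c i ^ (-(2 * ((t+1 : ℕ) : ℤ)))
      = qi c i ^ (-2:ℤ) * qi c i ^ (-(2 * (t:ℤ))) := by
    intro t _
    rw [← zpow_add₀ (qi_ne_zero c i)]
    congr 1
    push_cast
    ring
  rw [Finset.sum_congr rfl h, ← Finset.mul_sum]
  simp [add_comm]

lemma qint_eq_rho (n : ℕ) : qint c i n = qi c i ^ ((n : ℤ) - 1) * rho c i n := by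
  unfold qint rho
  rw [Finset.mul_sum]
  apply Finset.sum_congr rfl
  intro t _
  rw [show (n:ℤ)-1-2*(t:ℤ) = ((n:ℤ)-1) + (-(2*(t:ℤ))) from by ring,
    zpow_add₀ (qi_ne_zero c i)]

variable (he : 1 ≤ c i i / 2)
include he

lemma rho_ne_zero (n : ℕ) (hn : 1 ≤ n) : rho c i n ≠ 0 := by
  set e : ℕ := (c i i / 2).toNat with hee
  have he' : c i i / 2 = (e : ℤ) := by omega
  have he1 : 1 ≤ e := by omega
  -- v^{2(n-1)} * rho n = algebraMap of a polynomial with constant coefficient 1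
  have key : qi c i ^ (2 * ((n : ℤ) - 1)) * rho c i n =
      algebraMap (Polynomial ℚ) K (∑ t ∈ Finset.range n, Polynomial.X ^ (2 * e * t)) := by
    rw [map_sum, rho, Finset.mul_sum]
    -- reindex by reflection
    rw [← Finset.sum_range_reflect]
    apply Finset.sum_congr rfl
    intro t ht
    simp only [Finset.mem_range] at ht
    rw [← zpow_add₀ (qi_ne_zero c i), map_pow, RatFunc.algebraMap_X]
    have hq : qi c i = qvar ^ (e : ℤ) := by rw [qi, he']
    have hcast : ((n - 1 - t : ℕ) : ℤ) = (n : ℤ) - 1 - t := by omega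
    rw [hq, ← zpow_mul, show (RatFunc.X : K) ^ (2*e*t) = qvar ^ ((2*e*t : ℕ) : ℤ) from
      (zpow_natCast qvar (2*e*t)).symm]
    congr 1
    rw [hcast]
    push_cast
    ring
  intro h0
  rw [h0, mul_zero] at key
  have hpoly : (∑ t ∈ Finset.range n, (Polynomial.X : Polynomial ℚ) ^ (2 * e * t)) ≠ 0 := by
    intro hp
    have hc0 : (∑ t ∈ Finset.range n, (Polynomial.X : Polynomial ℚ) ^ (2 * e * t)).coeff 0 = 1 := by
      rw [Polynomial.finset_sum_coeff]
      have : ∀ t ∈ Finset.range n, ((Polynomial.X : Polynomial ℚ) ^ (2 * e * t)).coeff 0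
          = if t = 0 then 1 else 0 := by
        intro t _
        rw [Polynomial.coeff_X_pow]
        by_cases h : t = 0 <;> simp [h] <;> omega
      rw [Finset.sum_congr rfl this, Finset.sum_ite_eq' (Finset.range n) 0 (fun _ => (1:ℚ))]
      simp [hn]
      omega
    rw [hp] at hc0
    simp at hc0
  exact hpoly (by
    have := (map_eq_zero_iff (algebraMap (Polynomial ℚ) K)
      (RatFunc.algebraMap_injective ℚ)).mp key.symm
    exact this)

lemma qint_ne_zero (n : ℕ) (hn : 1 ≤ n) : qint c i n ≠ 0 := by
  rw [qint_eq_rho]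
  exact mul_ne_zero (zpow_ne_zero _ (qi_ne_zero c i)) (rho_ne_zero c i he n hn)

lemma qfact_ne_zero (n : ℕ) : qfact c i n ≠ 0 := by
  unfold qfact
  apply Finset.prod_ne_zero_iff.mpr
  intro k _
  exact qint_ne_zero c i he (k+1) (by omega)

omit he

@[simp] lemma qfact_zero : qfact c i 0 = 1 := by simp [qfact]

lemma qfact_succ (n : ℕ) : qfact c i (n + 1) = qfact c i n * qint c i (n + 1) :=
  Finset.prod_range_succ _ _

include he
lemma invfact_rho (t : ℕ) :
    (qfact c i (t+1))⁻¹ * rho c i (t+1) = (qfact c i t)⁻¹ * qi c i ^ (-(t : ℤ)) := by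
  have h1 : rho c i (t+1) ≠ 0 := rho_ne_zero c i he (t+1) (by omega)
  rw [qfact_succ, qint_eq_rho, show (((t+1:ℕ)):ℤ)-1 = (t:ℤ) from by push_cast; ring]
  rw [mul_inv, mul_inv, zpow_neg]
  rw [show (qfact c i t)⁻¹ * ((qi c i ^ (t:ℤ))⁻¹ * (rho c i (t+1))⁻¹) * rho c i (t+1)
      = (qfact c i t)⁻¹ * (qi c i ^ (t:ℤ))⁻¹ * ((rho c i (t+1))⁻¹ * rho c i (t+1)) from by ring]
  rw [inv_mul_cancel₀ h1, mul_one]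


omit he in
lemma pascal' (M a : ℕ) :
    qint c i (M + a) = qi c i ^ (a : ℤ) * qint c i M
      + qi c i ^ ((a:ℤ) - ((M + a : ℕ) : ℤ)) * qint c i a := by
  unfold qint
  rw [Finset.sum_range_add, Finset.mul_sum, Finset.mul_sum]
  congr 1
  · apply Finset.sum_congr rfl
    intro k _
    rw [← zpow_add₀ (qi_ne_zero c i)]
    congr 1
    push_cast
    ring
  · apply Finset.sum_congr rfl
    intro k _
    rw [← zpow_add₀ (qi_ne_zero c i)]
    congr 1
    push_cast
    ring

omit he in
lemma pascal (N a : ℕ) (ha : a ≤ N) :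
    qint c i N = qi c i ^ (a : ℤ) * qint c i (N - a)
      + qi c i ^ ((a:ℤ) - N) * qint c i a := by
  have h := pascal' c i (N - a) a
  rw [show N - a + a = N from by omega] at h
  exact h

include he

/-- key identity B : adjacent-coefficient cancellation -/
lemma identB (N t : ℕ) (ht : t + 1 ≤ N) :
    (qfact c i (t+1))⁻¹ * (qfact c i (N-1-t))⁻¹ * rho c i (t+1)
      = (qfact c i t)⁻¹ * (qfact c i (N-t))⁻¹ * (qi c i ^ ((N:ℤ) - 1 - 2*t))
        * rho c i (N-t) := by
  have h1 : (qfact c i (t+1))⁻¹ * rho c i (t+1)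
      = (qfact c i t)⁻¹ * qi c i ^ (-(t : ℤ)) := invfact_rho c i he t
  have h2 : (qfact c i (N-t))⁻¹ * rho c i (N-t)
      = (qfact c i (N-1-t))⁻¹ * qi c i ^ (-((N-1-t : ℕ) : ℤ)) := by
    rw [show N - t = (N-1-t) + 1 from by omega]
    exact invfact_rho c i he (N-1-t)
  calc (qfact c i (t+1))⁻¹ * (qfact c i (N-1-t))⁻¹ * rho c i (t+1)
      = ((qfact c i (t+1))⁻¹ * rho c i (t+1)) * (qfact c i (N-1-t))⁻¹ := by ring
    _ = (qfact c i t)⁻¹ * qi c i ^ (-(t : ℤ)) * (qfact c i (N-1-t))⁻¹ := by rw [h1]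
    _ = _ := by
        rw [show (qfact c i t)⁻¹ * (qfact c i (N-t))⁻¹ * (qi c i ^ ((N:ℤ) - 1 - 2*t))
            * rho c i (N-t)
            = (qfact c i t)⁻¹ * (qi c i ^ ((N:ℤ) - 1 - 2*t))
              * ((qfact c i (N-t))⁻¹ * rho c i (N-t)) from by ring, h2]
        rw [show (qfact c i t)⁻¹ * qi c i ^ (-(t:ℤ)) * (qfact c i (N-1-t))⁻¹
            = (qfact c i t)⁻¹ * (qfact c i (N-1-t))⁻¹ * qi c i ^ (-(t:ℤ)) from by ring]
        rw [show (qfact c i t)⁻¹ * qi c i ^ ((N:ℤ)-1-2*t)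
              * ((qfact c i (N-1-t))⁻¹ * qi c i ^ (-((N-1-t:ℕ):ℤ)))
            = (qfact c i t)⁻¹ * (qfact c i (N-1-t))⁻¹
              * (qi c i ^ ((N:ℤ)-1-2*t) * qi c i ^ (-((N-1-t:ℕ):ℤ))) from by ring]
        rw [← zpow_add₀ (qi_ne_zero c i)]
        congr 2
        omega

/-- key identity A : the alternating sum vanishes -/
lemma identA (N : ℕ) (hN : 1 ≤ N) :
    ∑ a ∈ Finset.range (N+1),
      ((-1 : K) ^ a * ((qfact c i a)⁻¹ * (qfact c i (N-a))⁻¹) * qi c i ^ ((a : ℤ) * ((N:ℤ)-1)))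
      = 0 := by
  have hv0 : qi c i ≠ 0 := qi_ne_zero c i
  have hqf : ∀ n, qfact c i n ≠ 0 := qfact_ne_zero c i he
  have hqi : ∀ n, 1 ≤ n → qint c i n ≠ 0 := fun n h => qint_ne_zero c i he n h
  set v : K := qi c i with hv
  set f : ℕ → K := fun a => if a = 0 then 0 else if a ≤ N then
      (-1 : K) ^ (a-1) * v ^ (((a:ℤ)-1) * N) *
        ((qfact c i (a-1))⁻¹ * (qfact c i (N-a))⁻¹ * (qint c i N)⁻¹) else 0 with hf
  have hfval : ∀ b : ℕ, 1 ≤ b → b ≤ N → f b = (-1 : K)^(b-1) * v ^ (((b:ℤ)-1) * N) *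
      ((qfact c i (b-1))⁻¹ * (qfact c i (N-b))⁻¹ * (qint c i N)⁻¹) := by
    intro b h1 h2
    simp only [hf]
    rw [if_neg (by omega), if_pos h2]
  have hf0 : f 0 = 0 := by simp [hf]
  have hfbig : ∀ b, N < b → f b = 0 := by
    intro b h
    simp only [hf]
    rw [if_neg (by omega), if_neg (by omega)]
  have hsplitN : ∀ b : ℕ, 1 ≤ b → qfact c i b = qfact c i (b-1) * qint c i b := by
    intro b hb
    rw [show b = (b-1)+1 from by omega, qfact_succ]
    congr 2 <;> omega
  have hsgn : ∀ b : ℕ, 1 ≤ b → (-1:K)^(b-1) = -(-1:K)^b := by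
    intro b hb
    have : (-1:K)^b = (-1:K)^(b-1) * (-1) := by
      rw [← pow_succ]
      congr 1
      omega
    rw [this]
    ring
  have hstep : ∀ a ∈ Finset.range (N+1),
      ((-1 : K) ^ a * ((qfact c i a)⁻¹ * (qfact c i (N-a))⁻¹) * v ^ ((a : ℤ) * ((N:ℤ)-1)))
      = f (a+1) - f a := by
    intro a ha
    simp only [Finset.mem_range] at ha
    have haN : a ≤ N := by omega
    rcases Nat.eq_zero_or_pos a with rfl | hapos
    · -- a = 0
      rw [hf0, hfval 1 le_rfl hN, sub_zero]
      simp only [Nat.sub_zero, Nat.sub_self]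
      rw [hsplitN N hN, mul_inv]
      norm_num
    · rcases Nat.eq_or_lt_of_le haN with heq | haltN
      · -- a = N
        subst heq
        rw [hfbig (a+1) (by omega), hfval a hapos le_rfl, zero_sub]
        rw [hsplitN a hapos, mul_inv, Nat.sub_self, qfact_zero, inv_one, hsgn a hapos]
        rw [show ((a:ℤ)-1) * (a:ℤ) = (a:ℤ) * ((a:ℤ)-1) from by ring]
        ring
      · -- 1 ≤ a ≤ N - 1
        rw [hfval (a+1) (by omega) (by omega), hfval a hapos (by omega)]
        rw [show a + 1 - 1 = a from by omega, show N - (a+1) = N - a - 1 from by omega]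
        have e1 : qfact c i (N-a) = qfact c i (N-a-1) * qint c i (N-a) := by
          have := hsplitN (N-a) (by omega)
          rw [show N - a - 1 = N - a - 1 from rfl]
          exact this
        have e2 : qfact c i a = qfact c i (a-1) * qint c i a := hsplitN a (by omega)
        have hp := pascal c i N a haN
        rw [e1, e2, mul_inv, mul_inv, hsgn a hapos]
        have hQa : qint c i a ≠ 0 := hqi a (by omega)
        have hQb : qint c i (N-a) ≠ 0 := hqi (N-a) (by omega)
        have hQN : qint c i N ≠ 0 := hqi N (by omega)
        have hA : qfact c i (a-1) ≠ 0 := hqf _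
        have hB : qfact c i (N-a-1) ≠ 0 := hqf _
        have hvexp1 : v ^ ((((a:ℕ):ℤ)+1-1) * N) = v ^ ((a:ℤ) * ((N:ℤ)-1)) * v ^ (a:ℤ) := by
          rw [← zpow_add₀ hv0]; congr 1; ring
        have hvexp2 : v ^ (((a:ℤ)-1) * N) = v ^ ((a:ℤ) * ((N:ℤ)-1)) * v ^ ((a:ℤ) - N) := by
          rw [← zpow_add₀ hv0]; congr 1; ring
        have hQacancel : (qint c i a)⁻¹ * qint c i a = 1 := inv_mul_cancel₀ hQa
        have hQbcancel : (qint c i (N-a))⁻¹ * qint c i (N-a) = 1 := inv_mul_cancel₀ hQb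
        have hQNcancel : (qint c i N)⁻¹ * qint c i N = 1 := inv_mul_cancel₀ hQN
        push_cast
        rw [hvexp1, hvexp2]
        linear_combination
          (-( (-1:K)^a * v ^ ((a:ℤ)*((N:ℤ)-1)) * (qfact c i (a-1))⁻¹ * (qint c i a)⁻¹
            * (qfact c i (N-a-1))⁻¹ * (qint c i (N-a))⁻¹ )) * hQNcancel
          + ((-1:K)^a * v ^ ((a:ℤ)*((N:ℤ)-1)) * v ^ (a:ℤ) * (qfact c i (a-1))⁻¹
            * (qint c i a)⁻¹ * (qfact c i (N-a-1))⁻¹ * (qint c i N)⁻¹) * hQbcancel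
          + ((-1:K)^a * v ^ ((a:ℤ)*((N:ℤ)-1)) * v ^ ((a:ℤ)-N) * (qfact c i (a-1))⁻¹
            * (qfact c i (N-a-1))⁻¹ * (qint c i N)⁻¹ * (qint c i (N-a))⁻¹) * hQacancel
          + ((-1:K)^a * v ^ ((a:ℤ)*((N:ℤ)-1)) * (qfact c i (a-1))⁻¹ * (qfact c i (N-a-1))⁻¹
            * (qint c i a)⁻¹ * (qint c i (N-a))⁻¹ * (qint c i N)⁻¹) * hp
  rw [Finset.sum_congr rfl hstep, Finset.sum_range_sub f (N+1)]
  rw [hfbig (N+1) (by omega), hf0, sub_zero]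


end


section
variable {I : Type} [DecidableEq I]

/-- `x ⊗ y ↦ ε(x) • y` -/
def Emap : F I ⊗[K] F I →ₗ[K] F I :=
  TensorProduct.lift ((LinearMap.lsmul K (F I)).comp eps.toLinearMap)

/-- `x ⊗ y ↦ D_k(x) • y` -/
def Lmap (k : I) : F I ⊗[K] F I →ₗ[K] F I :=
  TensorProduct.lift ((LinearMap.lsmul K (F I)).comp (Dk k))

@[simp] lemma Emap_tmul (x y : F I) : Emap (x ⊗ₜ[K] y) = eps x • y := rfl

@[simp] lemma Lmap_tmul (k : I) (x y : F I) : Lmap k (x ⊗ₜ[K] y) = Dk k x • y := rfl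

/-- induction for tensors, with first factors words -/
lemma tensor_ind_left (P : F I ⊗[K] F I → Prop) (h0 : P 0)
    (hadd : ∀ X Y, P X → P Y → P (X + Y)) (hsmul : ∀ (a : K) X, P X → P (a • X))
    (hpure : ∀ (l : List I) (y : F I), P (word l ⊗ₜ[K] y)) : ∀ X, P X := by
  intro X
  induction X using TensorProduct.induction_on with
  | zero => exact h0
  | add X Y hX hY => exact hadd X Y hX hY
  | tmul x y =>
    induction mem_span_words x using Submodule.span_induction with
    | mem x hx => obtain ⟨l, rfl⟩ := hx; exact hpure l y
    | zero => rw [TensorProduct.zero_tmul]; exact h0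
    | add a b _ _ ha hb => rw [TensorProduct.add_tmul]; exact hadd _ _ ha hb
    | smul a x _ hx => rw [← TensorProduct.smul_tmul']; exact hsmul a _ hx

/-- induction for tensors, with second factors words -/
lemma tensor_ind_right (P : F I ⊗[K] F I → Prop) (h0 : P 0)
    (hadd : ∀ X Y, P X → P Y → P (X + Y)) (hsmul : ∀ (a : K) X, P X → P (a • X))
    (hpure : ∀ (x : F I) (l : List I), P (x ⊗ₜ[K] word l)) : ∀ X, P X := by
  intro X
  induction X using TensorProduct.induction_on with
  | zero => exact h0
  | add X Y hX hY => exact hadd X Y hX hY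
  | tmul x y =>
    induction mem_span_words y using Submodule.span_induction with
    | mem y hy => obtain ⟨l, rfl⟩ := hy; exact hpure x l
    | zero => rw [TensorProduct.tmul_zero]; exact h0
    | add a b _ _ ha hb => rw [TensorProduct.tmul_add]; exact hadd _ _ ha hb
    | smul a y _ hy => rw [TensorProduct.tmul_smul]; exact hsmul a _ hy

variable (c : I → I → ℤ) (m : F I ⊗[K] F I →ₗ[K] F I ⊗[K] F I →ₗ[K] F I ⊗[K] F I)
variable (hm : IsTwistedMul c m)

@[simp] lemma toFinsupp_coe_nil : Multiset.toFinsupp ((([] : List I) : Multiset I)) = 0 := by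
  simp

include hm in
lemma Emap_m : ∀ (Y X : F I ⊗[K] F I), Emap (m X Y) = Emap X * Emap Y := by
  apply tensor_ind_left (P := fun Y => ∀ X, Emap (m X Y) = Emap X * Emap Y)
  · intro X; rw [map_zero, map_zero, mul_zero]
  · intro Y Y' hY hY' X
    rw [map_add, map_add, map_add, mul_add, hY, hY']
  · intro a Y hY X
    rw [map_smul, map_smul, map_smul, mul_smul_comm, hY]
  · intro l y
    apply tensor_ind_right (P := fun X => Emap (m X (word l ⊗ₜ[K] y)) = Emap X * Emap (word l ⊗ₜ[K] y))
    · simp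
    · intro X X' hX hX'
      rw [map_add, LinearMap.add_apply, map_add, map_add, add_mul, hX, hX']
    · intro a X hX
      rw [map_smul, LinearMap.smul_apply, map_smul, map_smul, smul_mul_assoc, hX]
    · intro x w
      rw [hm _ _ x (word w) (word l) y (word_mem_wtSpace w) (word_mem_wtSpace l)]
      rcases l with _ | ⟨a, l⟩
      · simp only [toFinsupp_coe_nil, wtPair_zero_right, neg_zero, zpow_zero, one_smul,
          word_nil, mul_one, Emap_tmul, map_mul, eps_word]
        simp [smul_mul_assoc]
      · simp only [map_smul, Emap_tmul, map_mul, eps_word, word_cons]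
        simp [map_mul]

variable (r : F I →ₗ[K] F I ⊗[K] F I)

include hm in
lemma Emap_r_id (hr : IsComult m r) : ∀ x : F I, Emap (r x) = x := by
  obtain ⟨hr1, hrmul, hrθ⟩ := hr
  refine FreeAlgebra.induction K I ?_ ?_ ?_ ?_
  · intro κ
    rw [Algebra.algebraMap_eq_smul_one, map_smul, hr1, map_smul, Emap_tmul]
    simp
  · intro x
    rw [show FreeAlgebra.ι K x = θ x from rfl, hrθ x, map_add, Emap_tmul, Emap_tmul]
    simp
  · intro a b ha hb
    rw [hrmul, Emap_m c m hm, ha, hb]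
  · intro a b ha hb
    rw [map_add, map_add, ha, hb]

include hm in
lemma Lmap_m_left (k l : I) : ∀ X,
    Lmap k (m ((θ l) ⊗ₜ[K] (1 : F I)) X) = (if k = l then (1:K) else 0) • Emap X := by
  apply tensor_ind_left
  · rw [map_zero, map_zero, map_zero, smul_zero]
  · intro X Y hX hY
    rw [map_add, map_add, map_add, smul_add, hX, hY]
  · intro a X hX
    rw [map_smul, map_smul, map_smul, hX, smul_comm]
  · intro w y
    rw [hm 0 _ (θ l) 1 (word w) y one_mem_wtSpace (word_mem_wtSpace w)]
    rw [wtPair_zero_left, neg_zero, zpow_zero, one_smul, Lmap_tmul, Emap_tmul, Dk_mul]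
    rcases w with _ | ⟨a, w⟩
    · simp only [word_nil, Dk_one, mul_zero, map_one, eps_word, Dk_theta, one_mul, zero_add]
      by_cases hkl : k = l
      · simp [hkl, if_pos rfl]
      · rw [if_neg (fun h => hkl h.symm), if_neg hkl]
        simp
    · simp only [eps_word, Dk_theta, eps_theta, zero_mul, if_neg (List.cons_ne_nil a w)]
      simp

include hm in
lemma Lmap_m_right (k l : I) : ∀ X,
    Lmap k (m ((1 : F I) ⊗ₜ[K] θ l) X) = qvar ^ (-(c l k)) • (θ l * Lmap k X) := by
  apply tensor_ind_left
  · simp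
  · intro X Y hX hY
    rw [map_add, map_add, map_add, hX, hY, mul_add, smul_add]
  · intro a X hX
    rw [map_smul, map_smul, map_smul, hX, mul_smul_comm, smul_comm]
  · intro w y
    rw [hm (Finsupp.single l 1) _ 1 (θ l) (word w) y (theta_mem_wtSpace l) (word_mem_wtSpace w)]
    rw [map_smul, Lmap_tmul, Lmap_tmul, one_mul]
    by_cases hw : w = [k]
    · subst hw
      have h1 : Multiset.toFinsupp (([k] : List I) : Multiset I) = Finsupp.single k 1 := by
        simp
      rw [h1, wtPair_single_single, Dk_word, if_pos rfl, one_smul, one_smul]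
    · rw [Dk_word, if_neg hw]
      simp

/-- the left `k`-derivation -/
def Lam (k : I) : F I →ₗ[K] F I := (Lmap k).comp r

include hm in
lemma Lam_one (hr : IsComult m r) (k : I) : Lam r k (1 : F I) = 0 := by
  rw [Lam, LinearMap.comp_apply, hr.1, Lmap_tmul, Dk_one, zero_smul]

include hm in
lemma Lam_theta_mul (hr : IsComult m r) (k l : I) (x : F I) :
    Lam r k (θ l * x) = (if k = l then x else 0)
      + qvar ^ (-(c l k)) • (θ l * Lam r k x) := by
  obtain ⟨hr1, hrmul, hrθ⟩ := hr
  rw [Lam, LinearMap.comp_apply, hrmul, hrθ, map_add, LinearMap.add_apply, map_add]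
  rw [Lmap_m_left c m hm k l, Lmap_m_right c m hm k l]
  rw [Emap_r_id c m hm r ⟨hr1, hrmul, hrθ⟩]
  congr 1
  split <;> simp

include hm in
lemma Lam_theta (hr : IsComult m r) (k l : I) :
    Lam r k (θ l) = if k = l then 1 else 0 := by
  rw [← mul_one (θ l), Lam_theta_mul c m hm r hr, Lam_one c m hm r hr, mul_zero, smul_zero,
    add_zero]

include hm in
lemma Lam_pow_ne (hr : IsComult m r) (k l : I) (hkl : k ≠ l) (n : ℕ) (x : F I) :
    Lam r k (θ l ^ n * x) = qvar ^ (-((n : ℤ) * c l k)) • (θ l ^ n * Lam r k x) := by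
  induction n generalizing x with
  | zero => simp
  | succ n ih =>
    rw [pow_succ', mul_assoc, Lam_theta_mul c m hm r hr, if_neg hkl, zero_add, ih,
      mul_smul_comm, smul_smul, ← mul_assoc, ← pow_succ', ← zpow_add₀ qvar_ne_zero]
    congr 2
    push_cast
    ring

include hm in
lemma Lam_pow_self (hr : IsComult m r) (l : I) (hev : c l l = 2 * (c l l / 2)) (n : ℕ) (x : F I) :
    Lam r l (θ l ^ (n+1) * x) = rho c l (n+1) • (θ l ^ n * x)
      + qvar ^ (-(((n:ℤ)+1) * c l l)) • (θ l ^ (n+1) * Lam r l x) := by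
  have hq2 : (qvar : K) ^ (-(c l l)) = qi c l ^ (-2 : ℤ) := by
    rw [qi, ← zpow_mul]
    congr 1
    omega
  induction n generalizing x with
  | zero =>
    rw [pow_one, Lam_theta_mul c m hm r hr, if_pos rfl, rho_one, pow_zero, one_mul, one_smul]
    norm_num
  | succ n ih =>
    rw [pow_succ', mul_assoc, Lam_theta_mul c m hm r hr, if_pos rfl, ih]
    rw [mul_add, smul_add, ← add_assoc]
    congr 1
    · rw [mul_smul_comm, smul_smul, ← mul_assoc, ← pow_succ', rho_succ c l (n+1), add_smul,
        one_smul, hq2]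
    · rw [mul_smul_comm, smul_smul, ← mul_assoc, ← zpow_add₀ qvar_ne_zero]
      rw [← pow_succ']
      congr 2
      push_cast
      ring

end


section
variable {I : Type} [DecidableEq I]
variable (c : I → I → ℤ) (m : F I ⊗[K] F I →ₗ[K] F I ⊗[K] F I →ₗ[K] F I ⊗[K] F I)
variable (hm : IsTwistedMul c m)
variable (r : F I →ₗ[K] F I ⊗[K] F I) (hr : IsComult m r)
variable (i j : I) (hij : i ≠ j)

include hm hr

lemma Lam_pow_of_ne (k l : I) (hkl : k ≠ l) (b : ℕ) : Lam r k (θ l ^ b) = 0 := by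
  rw [← mul_one (θ l ^ b), Lam_pow_ne c m hm r hr k l hkl, Lam_one c m hm r hr]
  simp

lemma Lam_pow_self_one (l : I) (hev : c l l = 2 * (c l l / 2)) (n : ℕ) :
    Lam r l (θ l ^ (n+1)) = rho c l (n+1) • θ l ^ n := by
  rw [← mul_one (θ l ^ (n+1)), Lam_pow_self c m hm r hr l hev, Lam_one c m hm r hr]
  simp

include hij

lemma Lam_j_inner (b : ℕ) : Lam r j (θ j * θ i ^ b) = θ i ^ b := by
  rw [Lam_theta_mul c m hm r hr, if_pos rfl,
    Lam_pow_of_ne c m hm r hr j i (Ne.symm hij)]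
  simp

lemma Lam_j_T (a b : ℕ) : Lam r j (θ i ^ a * (θ j * θ i ^ b)) =
    qvar ^ (-((a:ℤ) * c i j)) • (θ i ^ a * θ i ^ b) := by
  rw [Lam_pow_ne c m hm r hr j i (Ne.symm hij), Lam_j_inner c m hm r hr i j hij]

lemma Lam_i_inner (hev : c i i = 2 * (c i i / 2)) (b : ℕ) :
    Lam r i (θ j * θ i ^ b) = (qvar ^ (-(c j i)) * rho c i b) • (θ j * θ i ^ (b-1)) := by
  rw [Lam_theta_mul c m hm r hr, if_neg hij]
  rcases b with _ | b
  · rw [pow_zero]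
    simp [Lam_one c m hm r hr]
  · rw [Lam_pow_self_one c m hm r hr i hev b, mul_smul_comm, smul_smul]
    simp

lemma Lam_i_T (hev : c i i = 2 * (c i i / 2)) (a b : ℕ) :
    Lam r i (θ i ^ a * (θ j * θ i ^ b)) =
      rho c i a • (θ i ^ (a-1) * (θ j * θ i ^ b))
      + (qvar ^ (-((a:ℤ) * c i i) + -(c j i)) * rho c i b) • (θ i ^ a * (θ j * θ i ^ (b-1))) := by
  rcases a with _ | a
  · rw [pow_zero, one_mul, Lam_i_inner c m hm r hr i j hij hev b]
    simp
  · rw [Lam_pow_self c m hm r hr i hev a, Lam_i_inner c m hm r hr i j hij hev b,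
      mul_smul_comm, smul_smul]
    congr 2
    rw [← mul_assoc, ← zpow_add₀ qvar_ne_zero]
    congr 1

end


section
variable {I : Type} [DecidableEq I] (c : I → I → ℤ) (hc : CartanDatum c)
include hc

lemma cartan_even (l : I) : c l l = 2 * (c l l / 2) := by
  obtain ⟨t, ht⟩ := (hc.2.1 l).2
  omega

lemma cartan_half_pos (l : I) : 1 ≤ c l l / 2 := by
  have h := (hc.2.1 l).1
  obtain ⟨t, ht⟩ := (hc.2.1 l).2
  omega

lemma cartan_cij (i j : I) (hij : i ≠ j) : c i j = -((dij c i j : ℤ) * (c i i / 2)) := by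
  obtain ⟨hneg, hdvd⟩ := hc.2.2 i j hij
  obtain ⟨s, hs⟩ := hdvd
  have hpos := (hc.2.1 i).1
  obtain ⟨t, ht⟩ := (hc.2.1 i).2
  have hdiv : -(2 * c i j) / c i i = -s := by
    rw [hs, show -(c i i * s) = c i i * (-s) from by ring]
    exact Int.mul_ediv_cancel_left _ (by omega)
  have hs' : s ≤ 0 := by nlinarith
  rw [dij, hdiv, Int.toNat_of_nonneg (by omega)]
  have h2 : c i i / 2 = t := by omega
  rw [h2]
  have h3 : 2 * c i j = 2 * (t * s) := by rw [hs, ht]; ring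
  have h4 : c i j = t * s := by linarith
  rw [h4]
  ring

end

section
variable {I : Type} [DecidableEq I]
variable (c : I → I → ℤ) (m : F I ⊗[K] F I →ₗ[K] F I ⊗[K] F I →ₗ[K] F I ⊗[K] F I)
variable (hm : IsTwistedMul c m)
variable (r : F I →ₗ[K] F I ⊗[K] F I) (hr : IsComult m r)
variable (i j : I) (hij : i ≠ j)

lemma serre_form :
    serreElem c i j = ∑ a ∈ Finset.range (dij c i j + 2),
      ((-1:K)^a * ((qfact c i a)⁻¹ * (qfact c i (dij c i j + 1 - a))⁻¹)) •
        (θ i ^ a * (θ j * θ i ^ (dij c i j + 1 - a))) := by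
  unfold serreElem θdp
  apply Finset.sum_congr rfl
  intro a _
  rw [smul_mul_assoc, smul_mul_assoc, mul_smul_comm, smul_smul, smul_smul,
    mul_assoc (θ i ^ a) (θ j)]
  congr 1
  ring

include hm hr hij

lemma Lam_j_S (he1 : 1 ≤ c i i / 2)
    (hcij : c i j = -((dij c i j : ℤ) * (c i i / 2))) :
    Lam r j (serreElem c i j) = 0 := by
  rw [serre_form, map_sum]
  have hterm : ∀ a ∈ Finset.range (dij c i j + 2),
      Lam r j (((-1:K)^a * ((qfact c i a)⁻¹ * (qfact c i (dij c i j + 1 - a))⁻¹)) •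
        (θ i ^ a * (θ j * θ i ^ (dij c i j + 1 - a)))) =
      ((-1:K)^a * ((qfact c i a)⁻¹ * (qfact c i ((dij c i j + 1) - a))⁻¹)
        * qi c i ^ ((a:ℤ) * (((dij c i j + 1 : ℕ):ℤ) - 1))) • θ i ^ (dij c i j + 1) := by
    intro a ha
    simp only [Finset.mem_range] at ha
    rw [map_smul, Lam_j_T c m hm r hr i j hij, smul_smul]
    rw [show θ i ^ a * θ i ^ (dij c i j + 1 - a) = θ i ^ (dij c i j + 1) from by
      rw [← pow_add]; congr 1; omega]
    congr 1
    rw [qi, ← zpow_mul, hcij]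
    congr 1
    push_cast
    ring
  rw [Finset.sum_congr rfl hterm, ← Finset.sum_smul,
    identA c i he1 (dij c i j + 1) (by omega), zero_smul]

lemma Lam_i_S (he1 : 1 ≤ c i i / 2) (hev : c i i = 2 * (c i i / 2))
    (hcji : c j i = -((dij c i j : ℤ) * (c i i / 2))) :
    Lam r i (serreElem c i j) = 0 := by
  rw [serre_form, map_sum]
  simp only [map_smul, Lam_i_T c m hm r hr i j hij hev, smul_add, smul_smul]
  rw [Finset.sum_add_distrib]
  rw [Finset.sum_range_succ' _ (dij c i j + 1), Finset.sum_range_succ _ (dij c i j + 1)]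
  simp only [rho_zero, mul_zero, zero_smul, add_zero, Nat.sub_self]
  rw [← Finset.sum_add_distrib]
  apply Finset.sum_eq_zero
  intro t ht
  simp only [Finset.mem_range] at ht
  simp only [Nat.add_sub_cancel]
  rw [show dij c i j + 1 - t - 1 = dij c i j + 1 - (t+1) from by omega]
  rw [← add_smul]
  have key := identB c i he1 (dij c i j + 1) t (by omega)
  rw [show dij c i j + 1 - 1 - t = dij c i j + 1 - (t+1) from by omega] at key
  have hq : qvar ^ (-((t:ℤ) * c i i) + -(c j i))
      = qi c i ^ ((((dij c i j + 1 : ℕ)):ℤ) - 1 - 2*(t:ℤ)) := by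
    rw [qi, ← zpow_mul, hcji]
    have h2 : c i i = 2 * (c i i / 2) := hev
    congr 1
    rw [show -((t:ℤ) * c i i) = -((t:ℤ) * (2 * (c i i / 2))) from by rw [← h2]]
    push_cast
    ring
  rw [hq]
  rw [pow_succ]
  convert zero_smul K _ using 2
  linear_combination (-(-1:K)^t) * key

lemma Lam_k_S (k : I) (hki : k ≠ i) (hkj : k ≠ j) :
    Lam r k (serreElem c i j) = 0 := by
  rw [serre_form, map_sum]
  apply Finset.sum_eq_zero
  intro a _
  rw [map_smul, Lam_pow_ne c m hm r hr k i hki, Lam_theta_mul c m hm r hr k j, if_neg hkj,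
    Lam_pow_of_ne c m hm r hr k i hki]
  simp

end


section
variable {I : Type} [DecidableEq I]
variable (c : I → I → ℤ) (m : F I ⊗[K] F I →ₗ[K] F I ⊗[K] F I →ₗ[K] F I ⊗[K] F I)
variable (r : F I →ₗ[K] F I ⊗[K] F I) (hr : IsComult m r)
variable (B : F I →ₗ[K] F I →ₗ[K] K) (hB : Admissible c r B)

lemma BB_tmul (x x' y y' : F I) :
    BB B (x ⊗ₜ[K] x') (y ⊗ₜ[K] y') = B x' y' * B x y := by
  simp [BB, smul_eq_mul]

include hr hB

lemma B_one_right : ∀ w : F I, B w 1 = eps w := by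
  obtain ⟨hB1, hBθ, hBr, hBl⟩ := hB
  have hθ1 : ∀ l : I, B (θ l) (1 : F I) = 0 := by
    intro l
    have h := hBr (θ l) 1 1
    rw [mul_one, hr.2.2 l, map_add, LinearMap.add_apply, BB_tmul, BB_tmul, hB1] at h
    linear_combination -h
  refine FreeAlgebra.induction K I ?_ ?_ ?_ ?_
  · intro κ
    rw [Algebra.algebraMap_eq_smul_one, map_smul, LinearMap.smul_apply, hB1, map_smul]
    simp
  · intro l
    rw [show FreeAlgebra.ι K l = θ l from rfl, hθ1 l, eps_theta]
  · intro x y hx hy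
    rw [hBl x y 1, hr.1, BB_tmul, hx, hy, map_mul]
    ring
  · intro x y hx hy
    rw [map_add, LinearMap.add_apply, hx, hy, map_add]

lemma B_theta_right (k : I) : ∀ w : F I, B w (θ k) = (1 - qi c k ^ 2)⁻¹ * Dk k w := by
  have hBone := B_one_right c m r hr B hB
  obtain ⟨hB1, hBθ, hBr, hBl⟩ := hB
  have h1θ : B (1 : F I) (θ k) = 0 := by
    have h := hBl 1 1 (θ k)
    rw [mul_one, hr.2.2 k, map_add, BB_tmul, BB_tmul, hB1] at h
    linear_combination -h
  refine FreeAlgebra.induction K I ?_ ?_ ?_ ?_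
  · intro κ
    rw [Algebra.algebraMap_eq_smul_one, map_smul, LinearMap.smul_apply, h1θ, map_smul]
    simp
  · intro l
    rw [show FreeAlgebra.ι K l = θ l from rfl, hBθ l k, Dk_theta]
    by_cases h : l = k
    · subst h; simp
    · simp [h]
  · intro x y hx hy
    rw [hBl x y (θ k), hr.2.2 k, map_add, BB_tmul, BB_tmul, hx, hy, hBone x, hBone y, Dk_mul]
    ring
  · intro x y hx hy
    rw [map_add, LinearMap.add_apply, hx, hy, map_add]
    ring

lemma BB_thetaL (k : I) (y' : F I) : ∀ X : F I ⊗[K] F I,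
    BB B X (θ k ⊗ₜ[K] y') = (1 - qi c k ^ 2)⁻¹ * B (Lmap k X) y' := by
  intro X
  induction X using TensorProduct.induction_on with
  | zero => simp
  | tmul x x' =>
    rw [BB_tmul, B_theta_right c m r hr B hB k x, Lmap_tmul, map_smul, LinearMap.smul_apply,
      smul_eq_mul]
    ring
  | add X Y hX hY =>
    rw [map_add, LinearMap.add_apply, hX, hY, map_add, map_add, LinearMap.add_apply, mul_add]

end

end Aux

/-- the quantum Serre elements lie in the radical of any admissible
bilinear form. -/
theorem serre_mem_radical {I : Type} [Fintype I] [DecidableEq I]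
    (c : I → I → ℤ) (hc : CartanDatum c)
    (m : F I ⊗[K] F I →ₗ[K] F I ⊗[K] F I →ₗ[K] F I ⊗[K] F I)
    (hm : IsTwistedMul c m)
    (r : F I →ₗ[K] F I ⊗[K] F I) (hr : IsComult m r)
    (B : F I →ₗ[K] F I →ₗ[K] K) (hB : Admissible c r B) :
    ∀ i j : I, i ≠ j → ∀ y : F I, B (serreElem c i j) y = 0 := by
  intro i j hij y
  have he1 := Aux.cartan_half_pos c hc i
  have hev := Aux.cartan_even c hc i
  have hcij := Aux.cartan_cij c hc i j hij
  have hcji : c j i = -((dij c i j : ℤ) * (c i i / 2)) := by rw [hc.1 j i]; exact hcij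
  have hkey : ∀ k : I, Aux.Lam r k (serreElem c i j) = 0 := by
    intro k
    by_cases hk1 : k = i
    · subst hk1
      exact Aux.Lam_i_S c m hm r hr k j hij he1 hev hcji
    · by_cases hk2 : k = j
      · subst hk2
        exact Aux.Lam_j_S c m hm r hr i k hij he1 hcij
      · exact Aux.Lam_k_S c m hm r hr i j hij k hk1 hk2
  have hepsS : Aux.eps (serreElem c i j) = 0 := by
    rw [Aux.serre_form (c := c) (i := i) (j := j), map_sum]
    apply Finset.sum_eq_zero
    intro a _
    rw [map_smul]
    simp [map_mul, map_pow]
  have hrad : ∀ l : List I, B (serreElem c i j) (Aux.word l) = 0 := by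
    intro l
    cases l with
    | nil =>
      rw [Aux.word_nil, Aux.B_one_right c m r hr B hB, hepsS]
    | cons k l' =>
      rw [Aux.word_cons, hB.2.2.1 (serreElem c i j) (θ k) (Aux.word l'),
        Aux.BB_thetaL c m r hr B hB k (Aux.word l') (r (serreElem c i j))]
      have hlam : Aux.Lmap k (r (serreElem c i j)) = Aux.Lam r k (serreElem c i j) := rfl
      rw [hlam, hkey k]
      simp
  induction Aux.mem_span_words y using Submodule.span_induction with
  | mem w hw =>
    obtain ⟨l, rfl⟩ := hw
    exact hrad l
  | zero => exact map_zero _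
  | add a b _ _ ha hb => rw [map_add, ha, hb, add_zero]
  | smul a x _ hx => rw [map_smul, hx, smul_zero]
end
end

section
/- For every polynomial f ∈ P one has ∂(n)( x_1^{n-1} x_2^{n-2} ⋯ x_{n-1} · ∂(n)(f) ) = ∂(n)(f); equivalently, as operators on P, ∂(n) ∘ e_n = ∂(n), where e_n is the composite of ∂(n) followed by multiplication by x_1^{n-1} x_2^{n-2} ⋯ x_{n-1}. -/
/-!
Every letter `s_k` can be brought to the front of the reduced word of `w₀` by braid and
commutation moves, and `∂_k ∘ ∂_k = 0`; hence `∂_k ∘ ∂(n) = 0` for all `k`, i.e. `∂(n) f` is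
symmetric. Divided differences are linear over polynomials symmetric in the two variables they
exchange, so `∂(n) (x^δ · ∂(n) f) = ∂(n) f · ∂(n) x^δ`, and `∂(n) x^δ = 1`: the block
`∂_t ⋯ ∂_0` of the word takes `x^δ_{t+1}` to `x^δ_t`, where `δ_t = (t, t - 1, …, 1, 0, …)`.
-/


noncomputable section

open MvPolynomial

/-- The reduced word (s_1)(s_2 s_1)(s_3 s_2 s_1)⋯(s_{n-1}⋯s_1) of the longest element of
the symmetric group S_n, written 0-indexed (the simple transposition s_{k+1} corresponds
to the index k). -/
def nilWord (n : ℕ) : List ℕ :=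
  (List.range (n - 1)).flatMap fun t => (List.range (t + 1)).reverse

/-- The composite ∂(n) = ∂_{i_1} ∘ ⋯ ∘ ∂_{i_N} of the divided difference operators D
along the reduced word (s_1)(s_2 s_1)⋯(s_{n-1}⋯s_1) of the longest element of S_n. -/
def longOp {n : ℕ} (D : ℕ → MvPolynomial (Fin n) ℤ →ₗ[ℤ] MvPolynomial (Fin n) ℤ) :
    MvPolynomial (Fin n) ℤ →ₗ[ℤ] MvPolynomial (Fin n) ℤ :=
  (nilWord n).foldr (fun k acc => (D k).comp acc) LinearMap.id

/-- The staircase monomial x_1^{n-1} x_2^{n-2} ⋯ x_{n-1} (variables 0-indexed). -/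
def staircase (n : ℕ) : MvPolynomial (Fin n) ℤ :=
  ∏ i : Fin n, X i ^ (n - 1 - (i : ℕ))

/-- D k is, for each k with k+1 ≤ n-1 (0-indexed: k+1 < n), the divided difference
operator ∂_{k+1}, uniquely determined by (x_{k+1} - x_{k+2})·∂_{k+1}(f) = f - s_{k+1}(f). -/
def IsDDiff {n : ℕ} (D : ℕ → MvPolynomial (Fin n) ℤ →ₗ[ℤ] MvPolynomial (Fin n) ℤ) : Prop :=
  ∀ (k : ℕ) (hk : k + 1 < n) (f : MvPolynomial (Fin n) ℤ),
    (X (⟨k, Nat.lt_of_succ_lt hk⟩ : Fin n) - X ⟨k + 1, hk⟩) * D k f =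
      f - rename (Equiv.swap (⟨k, Nat.lt_of_succ_lt hk⟩ : Fin n) ⟨k + 1, hk⟩) f

open Equiv

section Swap

variable {σ R : Type*} [CommSemiring R] [DecidableEq σ]

theorem rename_swap_rename_swap (a b : σ) (f : MvPolynomial σ R) :
    rename (swap a b) (rename (swap a b) f) = f := by
  rw [rename_rename, ← Perm.coe_mul, swap_mul_self, Perm.coe_one, rename_id_apply]

theorem rename_swap_X_of_ne {a b c : σ} (hca : c ≠ a) (hcb : c ≠ b) :
    rename (swap a b) (X c : MvPolynomial σ R) = X c := by
  rw [rename_X, swap_apply_of_ne_of_ne hca hcb]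

theorem rename_swap_comm {a b c d : σ} (hac : a ≠ c) (had : a ≠ d) (hbc : b ≠ c) (hbd : b ≠ d)
    (f : MvPolynomial σ R) :
    rename (swap a b) (rename (swap c d) f) = rename (swap c d) (rename (swap a b) f) := by
  rw [rename_rename, rename_rename]
  congr 2
  funext i
  simp only [Function.comp_apply, swap_apply_def]
  split_ifs <;> simp_all

theorem rename_swap_conj {a b c : σ} (hac : a ≠ c) (hbc : b ≠ c) (f : MvPolynomial σ R) :
    rename (swap a b) (rename (swap b c) (rename (swap a b) f)) = rename (swap a c) f := by
  rw [rename_rename, rename_rename, ← Perm.coe_mul, ← Perm.coe_mul, swap_comm a b, swap_comm b c,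
    swap_mul_swap_mul_swap hbc.symm hac.symm]

theorem rename_swap_prod_X_pow [Fintype σ] {a b : σ} (e : σ → ℕ) (h : e a = e b) :
    rename (swap a b) (∏ i, X i ^ e i : MvPolynomial σ R) = ∏ i, X i ^ e i := by
  simp only [map_prod, map_pow, rename_X]
  rw [← Equiv.prod_comp (swap a b)]
  refine Fintype.prod_congr _ _ fun i => ?_
  rw [swap_apply_self]
  congr 1
  rcases eq_or_ne i a with rfl | hia
  · simp [h]
  rcases eq_or_ne i b with rfl | hib
  · simp [h]
  · rw [swap_apply_of_ne_of_ne hia hib]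

end Swap

section DividedDifference

variable {σ R : Type*} [CommRing R] [DecidableEq σ]

def IsDividedDifference (a b : σ) (d : Module.End R (MvPolynomial σ R)) : Prop :=
  ∀ f, (X a - X b) * d f = f - rename (swap a b) f

namespace IsDividedDifference

variable {a b c : σ} {d e : Module.End R (MvPolynomial σ R)}

theorem rename_swap_eq_of_apply_eq_zero (hd : IsDividedDifference a b d) {g : MvPolynomial σ R}
    (hg : d g = 0) : rename (swap a b) g = g := by
  have := hd g
  rw [hg, mul_zero] at this
  exact (sub_eq_zero.mp this.symm).symm

theorem neg_symm (hd : IsDividedDifference a b d) : IsDividedDifference b a (-d) := by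
  intro f
  rw [swap_comm, ← hd f, LinearMap.neg_apply]
  ring

variable [IsDomain R]

theorem apply_eq_of_mul_eq (hd : IsDividedDifference a b d) (hab : a ≠ b)
    {f u : MvPolynomial σ R} (h : (X a - X b) * u = f - rename (swap a b) f) : d f = u :=
  mul_left_cancel₀ (sub_ne_zero.mpr (X_injective.ne hab)) ((hd f).trans h.symm)

theorem rename_swap_apply (hd : IsDividedDifference a b d) (hab : a ≠ b) (f : MvPolynomial σ R) :
    rename (swap a b) (d f) = d f := by
  have h := congrArg (rename (swap a b)) (hd f)
  rw [map_mul, map_sub, map_sub, rename_swap_rename_swap, rename_X, rename_X, swap_apply_left,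
    swap_apply_right] at h
  refine (hd.apply_eq_of_mul_eq hab ?_).symm
  linear_combination -h

theorem apply_apply (hd : IsDividedDifference a b d) (hab : a ≠ b) (f : MvPolynomial σ R) :
    d (d f) = 0 :=
  hd.apply_eq_of_mul_eq hab (by rw [mul_zero, hd.rename_swap_apply hab, sub_self])

theorem apply_mul_of_rename_swap_eq (hd : IsDividedDifference a b d) (hab : a ≠ b)
    {g : MvPolynomial σ R} (hg : rename (swap a b) g = g) (f : MvPolynomial σ R) :
    d (g * f) = g * d f :=
  hd.apply_eq_of_mul_eq hab (by rw [map_mul, hg, mul_left_comm, hd f]; ring)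

theorem apply_X_mul (hd : IsDividedDifference a b d) (hab : a ≠ b) {g : MvPolynomial σ R}
    (hg : rename (swap a b) g = g) : d (X a * g) = g := by
  have hX : d (X a) = 1 := hd.apply_eq_of_mul_eq hab (by rw [rename_X, swap_apply_left, mul_one])
  rw [mul_comm, hd.apply_mul_of_rename_swap_eq hab hg, hX, mul_one]

theorem commute_of_disjoint {c' : σ} (hd : IsDividedDifference a b d)
    (he : IsDividedDifference c c' e) (hab : a ≠ b) (hcc' : c ≠ c') (hac : a ≠ c) (hac' : a ≠ c')
    (hbc : b ≠ c) (hbc' : b ≠ c') (f : MvPolynomial σ R) : d (e f) = e (d f) := by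
  have hroot : rename (swap c c') (X a - X b : MvPolynomial σ R) = X a - X b := by
    rw [map_sub, rename_swap_X_of_ne hac hac', rename_swap_X_of_ne hbc hbc']
  have hswap : rename (swap a b) (e f) = e (rename (swap a b) f) := by
    refine (he.apply_eq_of_mul_eq hcc' ?_).symm
    have h := congrArg (rename (swap a b)) (he f)
    rwa [map_mul, map_sub, map_sub, rename_swap_X_of_ne hac.symm hbc.symm,
      rename_swap_X_of_ne hac'.symm hbc'.symm, rename_swap_comm hac hac' hbc hbc'] at h
  refine hd.apply_eq_of_mul_eq hab ?_
  rw [← he.apply_mul_of_rename_swap_eq hcc' hroot, hd f, map_sub, hswap]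

theorem vandermonde_mul_apply_apply_apply (hd : IsDividedDifference a b d)
    (he : IsDividedDifference b c e) (hab : a ≠ b) (hac : a ≠ c) (hbc : b ≠ c)
    (f : MvPolynomial σ R) :
    (X a - X b) * (X b - X c) * (X a - X c) * d (e (d f)) =
      f - rename (swap a b) f - rename (swap b c) f + rename (swap a b) (rename (swap b c) f)
        + rename (swap b c) (rename (swap a b) f)
        - rename (swap a b) (rename (swap b c) (rename (swap a b) f)) := by
  have h1 := hd f
  have h2 := he (d f)
  have h3 := hd (e (d f))
  have h2' := congrArg (rename (swap a b)) h2
  rw [map_mul, map_sub, map_sub, rename_swap_X_of_ne hac.symm hbc.symm, rename_X,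
    swap_apply_right, hd.rename_swap_apply hab] at h2'
  have h1' := congrArg (rename (swap b c)) h1
  rw [map_mul, map_sub, map_sub, rename_swap_X_of_ne hab hac, rename_X, swap_apply_left] at h1'
  have h1'' := congrArg (rename (swap a b)) h1'
  rw [map_mul, map_sub, map_sub, rename_swap_X_of_ne hac.symm hbc.symm, rename_X,
    swap_apply_left] at h1''
  linear_combination (X b - X c) * (X a - X c) * h3 + (X a - X c) * h2 - (X b - X c) * h2'
    + h1 - h1' + h1''

theorem braid (hd : IsDividedDifference a b d) (he : IsDividedDifference b c e) (hab : a ≠ b)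
    (hac : a ≠ c) (hbc : b ≠ c) (f : MvPolynomial σ R) : d (e (d f)) = e (d (e f)) := by
  have hl := hd.vandermonde_mul_apply_apply_apply he hab hac hbc f
  -- Passing to `(c, b, a)` with `-e, -d` negates the Vandermonde product and, as
  -- `s_ab s_bc s_ab = s_bc s_ab s_bc`, leaves the alternating sum over `S₃` unchanged.
  have hr := he.neg_symm.vandermonde_mul_apply_apply_apply hd.neg_symm hbc.symm hac.symm hab.symm f
  simp only [LinearMap.neg_apply, map_neg, neg_neg] at hr
  rw [rename_swap_conj hac.symm hab.symm, swap_comm c b, swap_comm b a, swap_comm c a,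
    ← rename_swap_conj hac hbc] at hr
  have hV : (X a - X b) * (X b - X c) * (X a - X c) ≠ (0 : MvPolynomial σ R) := by
    simp only [ne_eq, mul_eq_zero, sub_eq_zero, not_or]
    exact ⟨⟨X_injective.ne hab, X_injective.ne hbc⟩, X_injective.ne hac⟩
  refine mul_left_cancel₀ hV ?_
  linear_combination hl - hr

theorem apply_prod_X_pow [Fintype σ] (hd : IsDividedDifference a b d) (hab : a ≠ b) (e : σ → ℕ)
    (he : e a = e b + 1) :
    d (∏ i, X i ^ e i) = ∏ i, X i ^ Function.update e a (e b) i := by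
  have hsplit : ∏ i, (X i : MvPolynomial σ R) ^ e i =
      X a * ∏ i, X i ^ Function.update e a (e b) i := by
    rw [Fintype.prod_eq_mul_prod_compl a, Fintype.prod_eq_mul_prod_compl a, ← mul_assoc,
      Function.update_self, he, pow_succ']
    congr 1
    refine Finset.prod_congr rfl fun i hi => ?_
    rw [Function.update_of_ne (by simpa using hi)]
  rw [hsplit, hd.apply_X_mul hab]
  exact rename_swap_prod_X_pow _ (by rw [Function.update_self, Function.update_of_ne hab.symm])

end IsDividedDifference

end DividedDifference

def descWord (t : ℕ) : List ℕ := (List.range (t + 1)).reverse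

def stairWord (t : ℕ) : List ℕ := (List.range t).flatMap descWord

theorem descWord_eq_cons (t : ℕ) : descWord t = t :: (List.range t).reverse := by
  simp [descWord, List.range_succ]

theorem descWord_succ (t : ℕ) : descWord (t + 1) = (t + 1) :: descWord t :=
  descWord_eq_cons (t + 1)

theorem descWord_eq_append (t : ℕ) :
    descWord t = ((List.range t).map Nat.succ).reverse ++ [0] := by
  rw [descWord, List.range_succ_eq_map, List.reverse_cons]

theorem stairWord_succ (t : ℕ) : stairWord (t + 1) = stairWord t ++ descWord t := by
  simp [stairWord, List.range_succ]

theorem lt_of_mem_stairWord {i t : ℕ} (h : i ∈ stairWord t) : i < t := by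
  simp only [stairWord, descWord, List.mem_flatMap, List.mem_reverse, List.mem_range] at h
  obtain ⟨s, hs, hi⟩ := h
  omega

/-- The exponent of `x_i` in `x^δ_{t+1}` once `∂_{j-1} ⋯ ∂_0` (0-indexed) has lowered its first
`j` exponents by one; `j = 0` gives `x^δ_{t+1}` and `j = t + 1` gives `x^δ_t`. -/
def stairExp (t j i : ℕ) : ℕ := if i < j then t - i else t + 1 - i

theorem longOp_eq_prod {n : ℕ} (D : ℕ → Module.End ℤ (MvPolynomial (Fin n) ℤ)) :
    longOp D = ((stairWord (n - 1)).map D).prod := by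
  rw [longOp, show nilWord n = stairWord (n - 1) from rfl]
  induction stairWord (n - 1) with
  | nil => rfl
  | cons k L ih => rw [List.foldr_cons, ih]; rfl

namespace IsDDiff

variable {n : ℕ} {D : ℕ → Module.End ℤ (MvPolynomial (Fin n) ℤ)}

theorem isDividedDifference (hD : IsDDiff D) {k : ℕ} (hk : k + 1 < n) :
    IsDividedDifference (⟨k, by omega⟩ : Fin n) ⟨k + 1, hk⟩ (D k) :=
  hD k hk

theorem mul_self (hD : IsDDiff D) {k : ℕ} (hk : k + 1 < n) : D k * D k = 0 :=
  LinearMap.ext fun f => (hD.isDividedDifference hk).apply_apply (by simp) f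

theorem commute_of_add_two_le (hD : IsDDiff D) {j k : ℕ} (hjk : j + 2 ≤ k) (hk : k + 1 < n) :
    Commute (D j) (D k) := by
  refine LinearMap.ext fun f => (hD.isDividedDifference (by omega)).commute_of_disjoint
    (hD.isDividedDifference hk) ?_ ?_ ?_ ?_ ?_ ?_ f
  all_goals simp only [ne_eq, Fin.mk.injEq]; omega

theorem braid (hD : IsDDiff D) {k : ℕ} (hk : k + 2 < n) :
    D k * D (k + 1) * D k = D (k + 1) * D k * D (k + 1) := by
  refine LinearMap.ext fun f => (hD.isDividedDifference (by omega)).braid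
    (hD.isDividedDifference hk) ?_ ?_ ?_ f
  all_goals simp only [ne_eq, Fin.mk.injEq]; omega

theorem commute_prod (hD : IsDDiff D) {j : ℕ} (hj : j + 1 < n) {L : List ℕ}
    (hL : ∀ i ∈ L, i + 2 ≤ j) : Commute (D j) (L.map D).prod :=
  Commute.list_prod_right _ _ fun _ hx => by
    obtain ⟨i, hi, rfl⟩ := List.mem_map.mp hx
    exact (hD.commute_of_add_two_le (hL i hi) hj).symm

theorem mul_prod_descWord (hD : IsDDiff D) {k m : ℕ} (hm : m + 1 < n) (hk : k < m) :
    D k * ((descWord m).map D).prod = ((descWord m).map D).prod * D (k + 1) := by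
  induction m with
  | zero => omega
  | succ j ih =>
    rw [descWord_eq_cons (j + 1), List.map_cons, List.prod_cons, ← descWord]
    rcases Nat.lt_or_ge k j with hkj | hkj
    · rw [← mul_assoc, (hD.commute_of_add_two_le (by omega) hm).eq, mul_assoc,
        ih (by omega) hkj, mul_assoc]
    obtain rfl : k = j := by omega
    have hR := hD.commute_prod hm (L := (List.range k).reverse) fun i hi => by
      simp only [List.mem_reverse, List.mem_range] at hi; omega
    rw [descWord_eq_cons k, List.map_cons, List.prod_cons]
    calc D k * (D (k + 1) * (D k * ((List.range k).reverse.map D).prod))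
        = D k * D (k + 1) * D k * ((List.range k).reverse.map D).prod := by noncomm_ring
      _ = D (k + 1) * D k * (D (k + 1) * ((List.range k).reverse.map D).prod) := by
          rw [hD.braid hm]; noncomm_ring
      _ = _ := by rw [hR.eq]; noncomm_ring

theorem prod_descWord_mul_prod_descWord (hD : IsDDiff D) {j m : ℕ} (hm : m + 1 < n)
    (hj : j ≤ m) : ((descWord m).map D).prod * ((descWord j).map D).prod = 0 := by
  induction j with
  | zero =>
    rw [show descWord 0 = [0] from rfl, descWord_eq_append m, List.map_append, List.prod_append]
    simp only [List.map_cons, List.map_nil, List.prod_cons, List.prod_nil, mul_one, mul_assoc,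
      hD.mul_self (k := 0) (by omega), mul_zero]
  | succ j ih =>
    rw [descWord_succ, List.map_cons, List.prod_cons, ← mul_assoc,
      ← hD.mul_prod_descWord hm (by omega), mul_assoc, ih (by omega), mul_zero]

theorem mul_prod_stairWord (hD : IsDDiff D) {k t : ℕ} (ht : t < n) (hk : k < t) :
    D k * ((stairWord t).map D).prod = 0 := by
  induction t with
  | zero => omega
  | succ t ih =>
    rw [stairWord_succ, List.map_append, List.prod_append]
    rcases Nat.lt_or_ge k t with hkt | hkt
    · rw [← mul_assoc, ih (by omega) hkt, zero_mul]
    obtain rfl : k = t := by omega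
    cases k with
    | zero => simp [stairWord, descWord, hD.mul_self ht]
    | succ s =>
      have hcomm := hD.commute_prod (j := s + 1) ht (L := stairWord s) fun i hi => by
        have := lt_of_mem_stairWord hi; omega
      have hblock : D (s + 1) * ((descWord s).map D).prod = ((descWord (s + 1)).map D).prod := by
        rw [descWord_succ, List.map_cons, List.prod_cons]
      rw [stairWord_succ, List.map_append, List.prod_append, ← mul_assoc, ← mul_assoc, hcomm.eq,
        mul_assoc _ (D (s + 1)), hblock, mul_assoc,
        hD.prod_descWord_mul_prod_descWord ht le_rfl, mul_zero]

theorem prod_map_apply_mul (hD : IsDDiff D) {L : List ℕ} (hL : ∀ i ∈ L, i + 1 < n)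
    {g : MvPolynomial (Fin n) ℤ}
    (hg : ∀ k (hk : k + 1 < n), rename (swap (⟨k, by omega⟩ : Fin n) ⟨k + 1, hk⟩) g = g)
    (f : MvPolynomial (Fin n) ℤ) : (L.map D).prod (g * f) = g * (L.map D).prod f := by
  induction L with
  | nil => rfl
  | cons k L ih =>
    have hk := hL k List.mem_cons_self
    rw [List.map_cons, List.prod_cons, Module.End.mul_apply, Module.End.mul_apply,
      ih fun i hi => hL i (List.mem_cons_of_mem k hi),
      (hD.isDividedDifference hk).apply_mul_of_rename_swap_eq (by simp) (hg k hk)]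

theorem apply_prod_X_pow_stairExp (hD : IsDDiff D) {t j : ℕ} (hj : j ≤ t) (hjn : j + 1 < n) :
    D j (∏ i : Fin n, X i ^ stairExp t j i) = ∏ i : Fin n, X i ^ stairExp t (j + 1) i := by
  rw [(hD.isDividedDifference hjn).apply_prod_X_pow (by simp) (fun i : Fin n => stairExp t j i)
    (by simp only [stairExp]; split_ifs <;> omega)]
  refine Fintype.prod_congr _ _ fun i => congrArg _ ?_
  simp only [Function.update_apply, Fin.ext_iff, stairExp]
  split_ifs <;> omega

theorem prod_range_reverse_apply_stairExp (hD : IsDDiff D) {t m : ℕ} (ht : t + 1 < n)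
    (hm : m ≤ t + 1) :
    ((List.range m).reverse.map D).prod (∏ i : Fin n, X i ^ stairExp t 0 i) =
      ∏ i : Fin n, X i ^ stairExp t m i := by
  induction m with
  | zero => rfl
  | succ m ih =>
    rw [List.range_succ, List.reverse_append, List.reverse_singleton, List.singleton_append,
      List.map_cons, List.prod_cons, Module.End.mul_apply, ih (by omega),
      hD.apply_prod_X_pow_stairExp (by omega) (by omega)]

theorem prod_stairWord_apply (hD : IsDDiff D) {t : ℕ} (ht : t < n) :
    ((stairWord t).map D).prod (∏ i : Fin n, X i ^ (t - i)) = 1 := by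
  induction t with
  | zero => simp [stairWord]
  | succ t ih =>
    have hstart : ∀ i : Fin n, t + 1 - (i : ℕ) = stairExp t 0 i := fun i => by simp [stairExp]
    have hend : ∀ i : Fin n, stairExp t (t + 1) i = t - i := fun i => by
      simp only [stairExp]; split_ifs <;> omega
    rw [stairWord_succ, List.map_append, List.prod_append, Module.End.mul_apply]
    simp only [hstart]
    rw [descWord, hD.prod_range_reverse_apply_stairExp ht le_rfl]
    simp only [hend]
    exact ih (by omega)

end IsDDiff

/-- ∂(n) ∘ e_n = ∂(n), i.e. ∂(n)(x_1^{n-1}⋯x_{n-1}·∂(n)(f)) = ∂(n)(f). -/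
theorem longOp_comp_en {n : ℕ} (hn : 1 ≤ n)
    (D : ℕ → MvPolynomial (Fin n) ℤ →ₗ[ℤ] MvPolynomial (Fin n) ℤ) (hD : IsDDiff D) :
    ∀ f : MvPolynomial (Fin n) ℤ,
      longOp D (staircase n * longOp D f) = longOp D f := by
  intro f
  set g := longOp D f with hg
  have hsym : ∀ k (hk : k + 1 < n), rename (swap (⟨k, by omega⟩ : Fin n) ⟨k + 1, hk⟩) g = g :=
    fun k hk => (hD.isDividedDifference hk).rename_swap_eq_of_apply_eq_zero <| by
      rw [hg, longOp_eq_prod, ← Module.End.mul_apply, hD.mul_prod_stairWord (by omega) (by omega),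
        LinearMap.zero_apply]
  have hletters : ∀ i ∈ stairWord (n - 1), i + 1 < n := fun i hi => by
    have := lt_of_mem_stairWord hi; omega
  rw [mul_comm, longOp_eq_prod, hD.prod_map_apply_mul hletters hsym, staircase,
    hD.prod_stairWord_apply (by omega), mul_one]
end
end

section
/- The longest divided difference operator is nonzero; more precisely, ∂(n)( x_1^{n-1} x_2^{n-2} ⋯ x_{n-1} ) = 1. In particular e_n(x_1^{n-1} x_2^{n-2} ⋯ x_{n-1}) = x_1^{n-1} x_2^{n-2} ⋯ x_{n-1}, so e_n is a nonzero idempotent operator. -/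
noncomputable section

open MvPolynomial

/-- Auxiliary: the monomial with exponent vector `c`. -/
def mon {n : ℕ} (c : Fin n → ℕ) : MvPolynomial (Fin n) ℤ := ∏ i, X i ^ c i

lemma rename_swap_mon {n : ℕ} (a b : Fin n) (c : Fin n → ℕ) :
    rename (Equiv.swap a b) (mon c) = mon (c ∘ Equiv.swap a b) := by
  unfold mon
  rw [map_prod]
  simp only [map_pow, rename_X]
  calc ∏ i, (X (Equiv.swap a b i) : MvPolynomial (Fin n) ℤ) ^ c i
      = ∏ i, (fun j => (X j : MvPolynomial (Fin n) ℤ) ^ c (Equiv.swap a b j))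
          (Equiv.swap a b i) := by
        apply Finset.prod_congr rfl
        intro i _
        simp [Equiv.swap_apply_self]
    _ = ∏ j, (X j : MvPolynomial (Fin n) ℤ) ^ c (Equiv.swap a b j) :=
        Equiv.prod_comp (Equiv.swap a b)
          (fun j => (X j : MvPolynomial (Fin n) ℤ) ^ c (Equiv.swap a b j))
    _ = mon (c ∘ Equiv.swap a b) := rfl

lemma mon_eq_X_mul {n : ℕ} (a : Fin n) (c c' : Fin n → ℕ) (h2 : c a = c' a + 1)
    (h3 : ∀ i, i ≠ a → c i = c' i) : mon c = X a * mon c' := by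
  unfold mon
  have herase : ∏ i ∈ Finset.univ.erase a, (X i : MvPolynomial (Fin n) ℤ) ^ c i
      = ∏ i ∈ Finset.univ.erase a, (X i : MvPolynomial (Fin n) ℤ) ^ c' i :=
    Finset.prod_congr rfl (fun i hi => by rw [h3 i (Finset.ne_of_mem_erase hi)])
  rw [← Finset.mul_prod_erase Finset.univ (fun i => (X i : MvPolynomial (Fin n) ℤ) ^ c i)
      (Finset.mem_univ a),
    ← Finset.mul_prod_erase Finset.univ (fun i => (X i : MvPolynomial (Fin n) ℤ) ^ c' i)
      (Finset.mem_univ a), h2, pow_succ, herase]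
  ring

lemma step_ddiff {n : ℕ} (D : ℕ → MvPolynomial (Fin n) ℤ →ₗ[ℤ] MvPolynomial (Fin n) ℤ)
    (hD : IsDDiff D) (k : ℕ) (hk : k + 1 < n) (c c' : Fin n → ℕ)
    (h1 : c' ⟨k, Nat.lt_of_succ_lt hk⟩ = c' ⟨k + 1, hk⟩)
    (h2 : c ⟨k, Nat.lt_of_succ_lt hk⟩ = c' ⟨k, Nat.lt_of_succ_lt hk⟩ + 1)
    (h3 : ∀ i, i ≠ (⟨k, Nat.lt_of_succ_lt hk⟩ : Fin n) → c i = c' i) :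
    D k (mon c) = mon c' := by
  set a : Fin n := ⟨k, Nat.lt_of_succ_lt hk⟩ with ha
  set b : Fin n := ⟨k + 1, hk⟩ with hb
  have hab : a ≠ b := by
    simp only [ha, hb, Fin.mk.injEq, ne_eq]
    omega
  have hXab : (X a : MvPolynomial (Fin n) ℤ) ≠ X b := fun h => hab (X_injective h)
  have hmc : mon c = X a * mon c' := mon_eq_X_mul a c c' h2 h3
  have hswapinv : c' ∘ Equiv.swap a b = c' := by
    funext i
    simp only [Function.comp_apply, Equiv.swap_apply_def]
    split_ifs with h h'
    · subst h; exact h1.symm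
    · subst h'; exact h1
    · rfl
  have hren : rename (Equiv.swap a b) (mon c) = X b * mon c' := by
    rw [hmc, map_mul, rename_X, Equiv.swap_apply_left, rename_swap_mon, hswapinv]
  have key := hD k hk (mon c)
  have key2 : (X a - X b) * D k (mon c) = (X a - X b) * mon c' := by
    rw [key, hren, hmc]; ring
  exact mul_left_cancel₀ (sub_ne_zero.mpr hXab) key2

/-- applying a word of operators -/
def app {n : ℕ} (D : ℕ → MvPolynomial (Fin n) ℤ →ₗ[ℤ] MvPolynomial (Fin n) ℤ)
    (l : List ℕ) (f : MvPolynomial (Fin n) ℤ) : MvPolynomial (Fin n) ℤ :=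
  l.foldr (fun k g => D k g) f

lemma longOp_eq_app {n : ℕ} (D : ℕ → MvPolynomial (Fin n) ℤ →ₗ[ℤ] MvPolynomial (Fin n) ℤ)
    (f : MvPolynomial (Fin n) ℤ) : longOp D f = app D (nilWord n) f := by
  unfold longOp app
  induction nilWord n with
  | nil => simp
  | cons k l ih => simp [List.foldr_cons, LinearMap.comp_apply, ih]

lemma app_append {n : ℕ} (D : ℕ → MvPolynomial (Fin n) ℤ →ₗ[ℤ] MvPolynomial (Fin n) ℤ)
    (l₁ l₂ : List ℕ) (f : MvPolynomial (Fin n) ℤ) :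
    app D (l₁ ++ l₂) f = app D l₁ (app D l₂ f) := by
  simp [app, List.foldr_append]

/-- Intermediate exponent vectors. -/
def ex {n : ℕ} (m j : ℕ) (i : Fin n) : ℕ := if (i : ℕ) < j then m - 2 - i else m - 1 - i

lemma block_lemma {n : ℕ} (D : ℕ → MvPolynomial (Fin n) ℤ →ₗ[ℤ] MvPolynomial (Fin n) ℤ)
    (hD : IsDDiff D) : ∀ (j m : ℕ), j < m → m ≤ n →
    app D ((List.range j).reverse) (mon (ex m 0)) = mon (ex m j) := by
  intro j
  induction j with
  | zero => intro m _ _; simp [app]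
  | succ j ih =>
    intro m hj hm
    rw [List.range_succ, List.reverse_append]
    have : ([j].reverse ++ (List.range j).reverse : List ℕ)
        = j :: (List.range j).reverse := by simp
    rw [this]
    have happ : app D (j :: (List.range j).reverse) (mon (ex m 0))
        = D j (app D ((List.range j).reverse) (mon (ex m 0))) := by simp [app]
    rw [happ, ih m (by omega) hm]
    have hk : j + 1 < n := by omega
    apply step_ddiff D hD j hk
    · show ex m (j+1) _ = ex m (j+1) _
      unfold ex
      simp only [Fin.val_mk]
      rw [if_pos (show (((⟨j, Nat.lt_of_succ_lt hk⟩ : Fin n) : ℕ)) < j + 1 by simp),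
        if_neg (show ¬ (((⟨j + 1, hk⟩ : Fin n) : ℕ)) < j + 1 by simp)]
      omega
    · show ex m j _ = ex m (j+1) _ + 1
      unfold ex
      simp only [Fin.val_mk]
      rw [if_neg (show ¬ (((⟨j, Nat.lt_of_succ_lt hk⟩ : Fin n) : ℕ)) < j by simp),
        if_pos (show (((⟨j, Nat.lt_of_succ_lt hk⟩ : Fin n) : ℕ)) < j + 1 by simp)]
      omega
    · intro i hi
      have hiv : (i : ℕ) ≠ j := fun h => hi (Fin.ext h)
      show ex m j i = ex m (j+1) i
      unfold ex
      split_ifs <;> omega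

lemma chain_lemma {n : ℕ} (D : ℕ → MvPolynomial (Fin n) ℤ →ₗ[ℤ] MvPolynomial (Fin n) ℤ)
    (hD : IsDDiff D) : ∀ t, t + 1 ≤ n →
    app D ((List.range t).flatMap fun s => (List.range (s + 1)).reverse)
      (mon (ex (t + 1) 0)) = 1 := by
  intro t
  induction t with
  | zero =>
    intro _
    simp only [List.range_zero, List.flatMap_nil]
    unfold app mon ex
    simp
  | succ t ih =>
    intro h
    rw [List.range_succ, List.flatMap_append, List.flatMap_singleton, app_append,
      block_lemma D hD (t + 1) (t + 2) (by omega) (by omega)]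
    have hmm : mon (ex (t + 2) (t + 1)) = (mon (ex (t + 1) 0) : MvPolynomial (Fin n) ℤ) := by
      congr 1
      funext i
      unfold ex
      split_ifs <;> omega
    rw [hmm, ih (by omega)]

/-- ∂(n)(x_1^{n-1} x_2^{n-2} ⋯ x_{n-1}) = 1; in particular
e_n(x_1^{n-1}⋯x_{n-1}) = x_1^{n-1}⋯x_{n-1}, so e_n is a nonzero (idempotent) operator. -/
theorem longOp_staircase {n : ℕ} (hn : 1 ≤ n)
    (D : ℕ → MvPolynomial (Fin n) ℤ →ₗ[ℤ] MvPolynomial (Fin n) ℤ) (hD : IsDDiff D) :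
    longOp D (staircase n) = 1 ∧
    staircase n * longOp D (staircase n) = staircase n ∧
    ¬ (∀ f : MvPolynomial (Fin n) ℤ, staircase n * longOp D f = 0) := by
  have hs : staircase n = mon (ex n 0) := by
    unfold staircase mon ex
    apply Finset.prod_congr rfl
    intro i _
    rw [if_neg (by omega : ¬ ((i : ℕ) < 0))]
  have h1 : longOp D (staircase n) = 1 := by
    rw [longOp_eq_app, hs]
    have hn' : n - 1 + 1 = n := Nat.sub_add_cancel hn
    have hc := chain_lemma D hD (n - 1) (by omega)
    rw [hn'] at hc
    exact hc
  refine ⟨h1, by rw [h1, mul_one], ?_⟩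
  intro hall
  have h2 := hall (staircase n)
  rw [h1, mul_one] at h2
  have h3 : staircase n ≠ 0 := by
    unfold staircase
    apply Finset.prod_ne_zero_iff.mpr
    intro i _
    exact pow_ne_zero _ (X_ne_zero i)
  exact h3 h2
end
end
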